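/- arXiv:1706.10125 — 9 statements merged into one kernel-verified Lean document; each statement's English description precedes it below -/
import Mathlib

section
/- For the action of G = ℤ/NℤN (N ≥ 3) on ℝ^N by cyclic coordinate shifts, with p₁ = (0,5,0,…,0), p₂ = (0,3,2,0,…,0), p₃ = (2,3,0,…,0) in ℝ^N, there exist no x ∈ [p₁], y ∈ [p₂], z ∈ [p₃] such that simultaneously ‖x−y‖ = d_Q([p₁],[p₂]), ‖x−z‖ = d_Q([p₁],[p₃]) and ‖y−z‖ = d_Q([p₂],[p₃]). In particular no congruent section of ℝ^N/(ℤ/Nℤ) exists. -/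
/-- The cyclic shift action of `ZMod N` on `ℝ^N` (Euclidean norm). -/
noncomputable def cyclicShift (N : ℕ) [NeZero N] (k : ZMod N)
    (x : EuclideanSpace ℝ (ZMod N)) : EuclideanSpace ℝ (ZMod N) :=
  (EuclideanSpace.equiv (ZMod N) ℝ).symm fun i => x (i + k)

/-- `p₁ = (0,5,0,…,0)`. -/
noncomputable def pOne (N : ℕ) [NeZero N] : EuclideanSpace ℝ (ZMod N) :=
  (EuclideanSpace.equiv (ZMod N) ℝ).symm fun i => if i = 1 then 5 else 0

/-- `p₂ = (0,3,2,0,…,0)`. -/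
noncomputable def pTwo (N : ℕ) [NeZero N] : EuclideanSpace ℝ (ZMod N) :=
  (EuclideanSpace.equiv (ZMod N) ℝ).symm fun i =>
    if i = 1 then 3 else if i = 2 then 2 else 0

/-- `p₃ = (2,3,0,…,0)`. -/
noncomputable def pThree (N : ℕ) [NeZero N] : EuclideanSpace ℝ (ZMod N) :=
  (EuclideanSpace.equiv (ZMod N) ℝ).symm fun i =>
    if i = 0 then 2 else if i = 1 then 3 else 0

/-! In `‖p₁ - k • q‖` the coordinate `5` of `p₁` faces one coordinate of `q`: facing the `3` of
`p₂` (resp. `p₃`) gives squared distance `8`, facing anything else at least `9`. So `p₁` realizes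
both quotient distances only against the unshifted `p₂` and `p₃`, and a triple realizing them is a
common shift of `(p₁, p₂, p₃)`. Then `‖y - z‖ = ‖p₂ - p₃‖ = √8`, whereas shifting `p₃` back by one
puts it at distance `√2` from `p₂`. -/

lemma natCast_ne_natCast_of_lt {N a b : ℕ} (ha : a < N) (hb : b < N) (h : a ≠ b) :
    (a : ZMod N) ≠ b := by
  rwa [Ne, ZMod.natCast_eq_natCast_iff', Nat.mod_eq_of_lt ha, Nat.mod_eq_of_lt hb]

lemma zero_ne_one_two_of_three_le {N : ℕ} (hN : 3 ≤ N) :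
    (0 : ZMod N) ≠ 1 ∧ (0 : ZMod N) ≠ 2 ∧ (1 : ZMod N) ≠ 2 := by
  refine ⟨?_, ?_, ?_⟩
  · exact_mod_cast natCast_ne_natCast_of_lt (a := 0) (b := 1) (by omega) (by omega) (by omega)
  · exact_mod_cast natCast_ne_natCast_of_lt (a := 0) (b := 2) (by omega) (by omega) (by omega)
  · exact_mod_cast natCast_ne_natCast_of_lt (a := 1) (b := 2) (by omega) (by omega) (by omega)

lemma eq_of_apply_eq_ciInf_of_forall_lt {ι : Type*} [Finite ι] {f : ι → ℝ} {a k : ι}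
    (ha : ∀ i ≠ a, f a < f i) (hk : f k = ⨅ i, f i) : k = a := by
  by_contra hka
  exact (ha k hka).not_ge (hk ▸ ciInf_le (Set.finite_range f).bddBelow a)

lemma real_norm_sq_eq_sq_add_sq {ι : Type*} [Fintype ι] [DecidableEq ι]
    {x : EuclideanSpace ℝ ι} {a b : ι} (hab : a ≠ b) (hx : ∀ i, i ≠ a → i ≠ b → x i = 0) :
    ‖x‖ ^ 2 = x a ^ 2 + x b ^ 2 := by
  rw [EuclideanSpace.real_norm_sq_eq, ← Finset.sum_pair (f := fun i => x i ^ 2) hab]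
  refine (Finset.sum_subset (Finset.subset_univ _) fun i _ hi => ?_).symm
  simp only [Finset.mem_insert, Finset.mem_singleton, not_or] at hi
  simp [hx i hi.1 hi.2]

section CyclicShift

variable {N : ℕ} [NeZero N]

@[simp]
lemma cyclicShift_apply (k : ZMod N) (x : EuclideanSpace ℝ (ZMod N)) (i : ZMod N) :
    cyclicShift N k x i = x (i + k) := rfl

lemma cyclicShift_eq_piLpCongrLeft (k : ZMod N) :
    cyclicShift N k = LinearIsometryEquiv.piLpCongrLeft 2 ℝ ℝ (Equiv.addRight k).symm := by
  ext x i
  simp [LinearIsometryEquiv.piLpCongrLeft_apply]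

lemma norm_cyclicShift (k : ZMod N) (x : EuclideanSpace ℝ (ZMod N)) :
    ‖cyclicShift N k x‖ = ‖x‖ := by
  rw [cyclicShift_eq_piLpCongrLeft, LinearIsometryEquiv.norm_map]

lemma cyclicShift_zero (x : EuclideanSpace ℝ (ZMod N)) : cyclicShift N 0 x = x := by
  ext i; simp

lemma cyclicShift_cyclicShift (k l : ZMod N) (x : EuclideanSpace ℝ (ZMod N)) :
    cyclicShift N k (cyclicShift N l x) = cyclicShift N (l + k) x := by
  ext i; simp [add_assoc, add_comm k]

lemma norm_cyclicShift_sub_cyclicShift (k l : ZMod N) (x y : EuclideanSpace ℝ (ZMod N)) :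
    ‖cyclicShift N k x - cyclicShift N l y‖ = ‖x - cyclicShift N (l - k) y‖ := by
  rw [← norm_cyclicShift k (x - _), cyclicShift_eq_piLpCongrLeft, map_sub,
    ← cyclicShift_eq_piLpCongrLeft, cyclicShift_cyclicShift, sub_add_cancel]

end CyclicShift

section Points

variable {N : ℕ} [NeZero N]

@[simp]
lemma pOne_apply (i : ZMod N) : pOne N i = if i = 1 then 5 else 0 := rfl

@[simp]
lemma pTwo_apply (i : ZMod N) : pTwo N i = if i = 1 then 3 else if i = 2 then 2 else 0 := rfl

@[simp]
lemma pThree_apply (i : ZMod N) : pThree N i = if i = 0 then 2 else if i = 1 then 3 else 0 := rfl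

lemma three_le_norm_pOne_sub_cyclicShift {y : EuclideanSpace ℝ (ZMod N)} (hy : ∀ i ≠ 1, y i ≤ 2)
    {k : ZMod N} (hk : k ≠ 0) : 3 ≤ ‖pOne N - cyclicShift N k y‖ := by
  have h1k : 1 + k ≠ 1 := by simpa using hk
  calc (3 : ℝ) ≤ 5 - y (1 + k) := by linarith [hy _ h1k]
    _ ≤ ‖(pOne N - cyclicShift N k y) 1‖ := by simpa using le_abs_self (5 - y (1 + k))
    _ ≤ _ := PiLp.norm_apply_le _ 1

variable (hN : 3 ≤ N)
include hN

lemma norm_pOne_sub_pTwo_sq : ‖pOne N - pTwo N‖ ^ 2 = 8 := by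
  obtain ⟨-, -, h12⟩ := zero_ne_one_two_of_three_le hN
  rw [real_norm_sq_eq_sq_add_sq h12 fun i h1 h2 => by simp [h1, h2]]
  norm_num [h12.symm]

lemma norm_pOne_sub_pThree_sq : ‖pOne N - pThree N‖ ^ 2 = 8 := by
  obtain ⟨h01, -, -⟩ := zero_ne_one_two_of_three_le hN
  rw [real_norm_sq_eq_sq_add_sq h01 fun i h0 h1 => by simp [h0, h1]]
  norm_num [h01, h01.symm]

lemma norm_pTwo_sub_pThree_sq : ‖pTwo N - pThree N‖ ^ 2 = 8 := by
  obtain ⟨h01, h02, h12⟩ := zero_ne_one_two_of_three_le hN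
  rw [real_norm_sq_eq_sq_add_sq h02 fun i h0 h2 => by
    by_cases h1 : i = 1 <;> simp [h0, h1, h2, h01.symm]]
  norm_num [h01, h02, h12.symm, h02.symm]

-- `cyclicShift N (-1) (pThree N) = (0,2,3,0,…,0)`
lemma norm_pTwo_sub_cyclicShift_pThree_sq :
    ‖pTwo N - cyclicShift N (-1) (pThree N)‖ ^ 2 = 2 := by
  obtain ⟨h01, -, h12⟩ := zero_ne_one_two_of_three_le hN
  have h21 : (2 : ZMod N) + -1 = 1 := by ring
  rw [real_norm_sq_eq_sq_add_sq h12 fun i h1 h2 => ?_]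
  · norm_num [h21, h12.symm, h01.symm]
  have h1' : i + -1 ≠ 0 := fun h => h1 (by linear_combination h)
  have h2' : i + -1 ≠ 1 := fun h => h2 (by linear_combination h)
  simp [h1, h2, h1', h2']

lemma norm_pOne_sub_pTwo_lt {k : ZMod N} (hk : k ≠ 0) :
    ‖pOne N - pTwo N‖ < ‖pOne N - cyclicShift N k (pTwo N)‖ := by
  refine lt_of_lt_of_le ?_ (three_le_norm_pOne_sub_cyclicShift (fun i hi => ?_) hk)
  · exact lt_of_pow_lt_pow_left₀ 2 (by norm_num) (by rw [norm_pOne_sub_pTwo_sq hN]; norm_num)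
  · simp only [pTwo_apply, if_neg hi]; split_ifs <;> norm_num

lemma norm_pOne_sub_pThree_lt {k : ZMod N} (hk : k ≠ 0) :
    ‖pOne N - pThree N‖ < ‖pOne N - cyclicShift N k (pThree N)‖ := by
  refine lt_of_lt_of_le ?_ (three_le_norm_pOne_sub_cyclicShift (fun i hi => ?_) hk)
  · exact lt_of_pow_lt_pow_left₀ 2 (by norm_num) (by rw [norm_pOne_sub_pThree_sq hN]; norm_num)
  · simp only [pThree_apply, if_neg hi]; split_ifs <;> norm_num

lemma norm_pTwo_sub_cyclicShift_pThree_lt :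
    ‖pTwo N - cyclicShift N (-1) (pThree N)‖ < ‖pTwo N - pThree N‖ := by
  refine lt_of_pow_lt_pow_left₀ 2 (norm_nonneg _) ?_
  rw [norm_pTwo_sub_cyclicShift_pThree_sq hN, norm_pTwo_sub_pThree_sq hN]
  norm_num

end Points

/-- For the cyclic shift action of `ℤ/Nℤ` (N ≥ 3) on `ℝ^N`, there are no
representatives `x ∈ [p₁]`, `y ∈ [p₂]`, `z ∈ [p₃]` realizing simultaneously all
three pairwise quotient distances; hence no congruent section exists. -/
theorem stmt3 (N : ℕ) [NeZero N] (hN : 3 ≤ N) :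
    ¬ ∃ k₁ k₂ k₃ : ZMod N,
      ‖cyclicShift N k₁ (pOne N) - cyclicShift N k₂ (pTwo N)‖ =
          (⨅ k : ZMod N, ‖pOne N - cyclicShift N k (pTwo N)‖) ∧
      ‖cyclicShift N k₁ (pOne N) - cyclicShift N k₃ (pThree N)‖ =
          (⨅ k : ZMod N, ‖pOne N - cyclicShift N k (pThree N)‖) ∧
      ‖cyclicShift N k₂ (pTwo N) - cyclicShift N k₃ (pThree N)‖ =
          (⨅ k : ZMod N, ‖pTwo N - cyclicShift N k (pThree N)‖) := by
  rintro ⟨k₁, k₂, k₃, h₁₂, h₁₃, h₂₃⟩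
  rw [norm_cyclicShift_sub_cyclicShift] at h₁₂ h₁₃ h₂₃
  have hk₂ : k₂ - k₁ = 0 := eq_of_apply_eq_ciInf_of_forall_lt
    (f := fun k => ‖pOne N - cyclicShift N k (pTwo N)‖)
    (fun k hk => by simpa only [cyclicShift_zero] using norm_pOne_sub_pTwo_lt hN hk) h₁₂
  have hk₃ : k₃ - k₁ = 0 := eq_of_apply_eq_ciInf_of_forall_lt
    (f := fun k => ‖pOne N - cyclicShift N k (pThree N)‖)
    (fun k hk => by simpa only [cyclicShift_zero] using norm_pOne_sub_pThree_lt hN hk) h₁₃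
  have hk : k₃ - k₂ = 0 := by rw [← sub_sub_sub_cancel_right k₃ k₂ k₁, hk₂, hk₃, sub_zero]
  rw [hk, cyclicShift_zero] at h₂₃
  refine (norm_pTwo_sub_cyclicShift_pThree_lt hN).not_ge ?_
  exact h₂₃ ▸ ciInf_le (Set.finite_range _).bddBelow (-1)
end

section
/- Let G act by linear isometries on a Hilbert space M, let ε be a random variable in M with E(ε)=0 and E(‖ε‖²)=1, whose support is not contained in the set of fixed points of the G-action. Then K := sup_{‖v‖=1} E(sup_{g∈G} ⟨v, g·ε⟩) is strictly positive. -/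
/-!
Let `A_v(y) = sup_g ⟪v, g • y⟫`. Taking `g = 1` and `g = g₀` shows
`A_v(y) + A_{-v}(y) ≥ ⟪v, g₀ • y - y⟫`, so `A_v + A_{-v} ≥ 0` everywhere. If `x` is a support point
moved by `g₀` and `v` points along `g₀ • x - x`, then `⟪v, g₀ • y - y⟫ > 0` for `y` near `x`,
an event of positive probability. Hence `E A_v(ε) + E A_{-v}(ε) > 0`, and one of the two unit
vectors `±v` gives a positive expectation.
-/

open MeasureTheory ProbabilityTheory RealInnerProductSpace

section AlignedSup

variable {M : Type*} [NormedAddCommGroup M] [InnerProductSpace ℝ M]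
  {G : Type*} [Group G] (ρ : G →* (M →ₗᵢ[ℝ] M))

noncomputable def alignedSup (v y : M) : ℝ := ⨆ g : G, ⟪v, ρ g y⟫

theorem inner_orbit_le_norm_mul_norm (v y : M) (g : G) : ⟪v, ρ g y⟫ ≤ ‖v‖ * ‖y‖ :=
  (real_inner_le_norm _ _).trans_eq (by rw [(ρ g).norm_map])

theorem inner_le_alignedSup (v y : M) (g : G) : ⟪v, ρ g y⟫ ≤ alignedSup ρ v y :=
  le_ciSup ⟨‖v‖ * ‖y‖, by rintro _ ⟨h, rfl⟩; exact inner_orbit_le_norm_mul_norm ρ v y h⟩ g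

theorem alignedSup_le (v y : M) : alignedSup ρ v y ≤ ‖v‖ * ‖y‖ :=
  ciSup_le (inner_orbit_le_norm_mul_norm ρ v y)

theorem inner_sub_le_alignedSup_add_neg (v y : M) (g : G) :
    ⟪v, ρ g y - y⟫ ≤ alignedSup ρ v y + alignedSup ρ (-v) y := by
  have h₁ := inner_le_alignedSup ρ v y g
  have h₂ := inner_le_alignedSup ρ (-v) y 1
  rw [map_one, LinearIsometry.coe_one, id, inner_neg_left] at h₂
  rw [inner_sub_right]
  linarith

theorem alignedSup_add_neg_nonneg (v y : M) : 0 ≤ alignedSup ρ v y + alignedSup ρ (-v) y := by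
  simpa using inner_sub_le_alignedSup_add_neg ρ v y 1

variable {Ω : Type*} [MeasurableSpace Ω] {μ : Measure Ω} {ε : Ω → M}

theorem integral_alignedSup_add_neg_pos {v : M} {g : G} {s : Set M}
    (hs : 0 < μ (ε ⁻¹' s)) (hpos : ∀ y ∈ s, 0 < ⟪v, ρ g y - y⟫)
    (hv : Integrable (fun ω => alignedSup ρ v (ε ω)) μ)
    (hnv : Integrable (fun ω => alignedSup ρ (-v) (ε ω)) μ) :
    0 < (∫ ω, alignedSup ρ v (ε ω) ∂μ) + ∫ ω, alignedSup ρ (-v) (ε ω) ∂μ := by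
  rw [← integral_add hv hnv, integral_pos_iff_support_of_nonneg
    (fun ω => alignedSup_add_neg_nonneg ρ v (ε ω)) (hv.add hnv)]
  refine hs.trans_le (measure_mono fun ω hω => ?_)
  exact ((hpos _ hω).trans_le (inner_sub_le_alignedSup_add_neg ρ v (ε ω) g)).ne'

theorem bddAbove_range_integral_alignedSup (hε : Integrable ε μ)
    (hint : ∀ v : M, ‖v‖ = 1 → Integrable (fun ω => alignedSup ρ v (ε ω)) μ) :
    BddAbove (Set.range fun v : {v : M // ‖v‖ = 1} => ∫ ω, alignedSup ρ v.1 (ε ω) ∂μ) := by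
  refine ⟨∫ ω, ‖ε ω‖ ∂μ, ?_⟩
  rintro _ ⟨⟨v, hv⟩, rfl⟩
  refine integral_mono (hint v hv) hε.norm fun ω => ?_
  simpa [hv] using alignedSup_le ρ v (ε ω)

end AlignedSup

theorem LinearIsometry.inner_sub_pos_of_mem_ball {M : Type*} [NormedAddCommGroup M]
    [InnerProductSpace ℝ M] (T : M →ₗᵢ[ℝ] M) {x y : M}
    (hy : y ∈ Metric.ball x (‖T x - x‖ / 2)) : 0 < ⟪T x - x, T y - y⟫ := by
  set w := T x - x
  set d := y - x
  have hd : ‖d‖ < ‖w‖ / 2 := by rwa [Metric.mem_ball, dist_eq_norm] at hy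
  have hsplit : T y - y = w + (T d - d) := by simp only [w, d, T.map_sub]; abel
  have hTd : ‖T d - d‖ ≤ 2 * ‖d‖ := by
    have := norm_sub_le (T d) d
    rw [T.norm_map] at this
    linarith
  have hcs : -(‖w‖ * ‖T d - d‖) ≤ ⟪w, T d - d⟫ := (abs_le.1 (abs_real_inner_le_norm _ _)).1
  rw [hsplit, inner_add_right, real_inner_self_eq_norm_sq]
  nlinarith [norm_nonneg w, norm_nonneg d]

theorem stmt4_general {M : Type*} [NormedAddCommGroup M] [InnerProductSpace ℝ M]
    {G : Type*} [Group G] (ρ : G →* (M →ₗᵢ[ℝ] M))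
    {Ω : Type*} [MeasureSpace Ω]
    (ε : Ω → M)
    (hint : Integrable ε)
    (hintsup : ∀ v : M, ‖v‖ = 1 → Integrable (fun ω => ⨆ g : G, ⟪v, ρ g (ε ω)⟫))
    (hsupp : ∃ x : M, (∀ r > 0, 0 < ℙ (ε ⁻¹' Metric.ball x r)) ∧ ∃ g : G, ρ g x ≠ x) :
    0 < ⨆ v : {v : M // ‖v‖ = 1}, ∫ ω, ⨆ g : G, ⟪v.1, ρ g (ε ω)⟫ := by
  obtain ⟨x, hx, g, hg⟩ := hsupp
  set w := ρ g x - x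
  have hw : 0 < ‖w‖ := norm_pos_iff.2 (sub_ne_zero.2 hg)
  set v := ‖w‖⁻¹ • w
  have hv : ‖v‖ = 1 := norm_smul_inv_norm (norm_pos_iff.1 hw)
  have hnv : ‖-v‖ = 1 := by rw [norm_neg, hv]
  have hsum := integral_alignedSup_add_neg_pos ρ (hx _ (half_pos hw))
    (fun y hy => by
      rw [real_inner_smul_left]
      exact mul_pos (inv_pos.2 hw) ((ρ g).inner_sub_pos_of_mem_ball hy))
    (hintsup v hv) (hintsup (-v) hnv)
  have hbdd := bddAbove_range_integral_alignedSup ρ hint hintsup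
  have h₁ := le_ciSup hbdd ⟨v, hv⟩
  have h₂ := le_ciSup hbdd ⟨-v, hnv⟩
  change 0 < ⨆ u : {u : M // ‖u‖ = 1}, ∫ ω, alignedSup ρ u.1 (ε ω)
  linarith

/-- If the support of the standardized noise `ε` is not contained in the set of
fixed points of a group acting by linear isometries on a Hilbert space, then
`K = sup_{‖v‖=1} E(sup_g ⟪v, g·ε⟫) > 0`. -/
theorem stmt4 {M : Type*} [NormedAddCommGroup M] [InnerProductSpace ℝ M]
    {G : Type*} [Group G] (ρ : G →* (M →ₗᵢ[ℝ] M))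
    {Ω : Type*} [MeasureSpace Ω] [IsProbabilityMeasure (ℙ : Measure Ω)]
    (ε : Ω → M) (hmeas : AEStronglyMeasurable ε ℙ)
    (hint : Integrable ε) (hmean : (∫ ω, ε ω) = 0)
    (hvar : (∫ ω, ‖ε ω‖ ^ 2) = 1)
    (hintsup : ∀ v : M, ‖v‖ = 1 → Integrable (fun ω => ⨆ g : G, ⟪v, ρ g (ε ω)⟫))
    (hsupp : ∃ x : M, (∀ r > 0, 0 < ℙ (ε ⁻¹' Metric.ball x r)) ∧ ∃ g : G, ρ g x ≠ x) :
    0 < ⨆ v : {v : M // ‖v‖ = 1}, ∫ ω, ⨆ g : G, ⟪v.1, ρ g (ε ω)⟫ :=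
  stmt4_general ρ ε hint hintsup hsupp
end

section
/- Let Y = Φ·t₀ + σε where G acts by linear isometries on a Hilbert space M, Φ is a G-valued random variable, ε is centered with E(‖ε‖²)=1, and Φ, ε are independent. Define F(x) = E(inf_{g∈G} ‖x − g·Y‖²). If m⋆ minimizes F over M, then ‖m⋆‖ satisfies σK − ‖t₀‖ ≤ ‖m⋆‖ ≤ σK + ‖t₀‖, where K = sup_{‖v‖=1} E(sup_{g∈G} ⟨v, g·ε⟩). -/
open MeasureTheory ProbabilityTheory RealInnerProductSpace

/-!
Along the ray through a unit vector `v` the variance is the quadratic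
`F (r • v) = r² - 2 r J_Y(v) + E‖Y‖²` in `r ≥ 0`, where `J_Y(v) = E sup_g ⟪v, g·Y⟫`; hence a
minimizer has norm `max (sup_{‖v‖=1} J_Y(v)) 0`. As `g·Y = gΦ·t₀ + σ g·ε` and
`|⟪v, gΦ·t₀⟫| ≤ ‖t₀‖`, each `J_Y(v)` lies within `‖t₀‖` of `σ J_ε(v)`, and taking suprema over `v`
gives both bounds; `K ≥ 0` because `J_ε(v) + J_ε(-v) ≥ 0`.
-/

theorem ciSup_le_ciSup_add {ι : Sort*} [Nonempty ι] {f g : ι → ℝ} {c : ℝ}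
    (hg : BddAbove (Set.range g)) (h : ∀ i, f i ≤ g i + c) : ⨆ i, f i ≤ (⨆ i, g i) + c :=
  ciSup_le fun i => (h i).trans (add_le_add_left (le_ciSup hg i) c)

theorem abs_ciSup_sub_ciSup_le {ι : Sort*} [Nonempty ι] {f g : ι → ℝ} {c : ℝ}
    (hf : BddAbove (Set.range f)) (hg : BddAbove (Set.range g)) (h : ∀ i, |f i - g i| ≤ c) :
    |(⨆ i, f i) - ⨆ i, g i| ≤ c := by
  refine abs_sub_le_iff.2 ⟨?_, ?_⟩ <;> rw [sub_le_iff_le_add']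
  · exact ciSup_le_ciSup_add hg fun i => by linarith [abs_sub_le_iff.1 (h i)]
  · exact ciSup_le_ciSup_add hf fun i => by linarith [abs_sub_le_iff.1 (h i)]

section IsometryFamily

variable {M : Type*} [NormedAddCommGroup M] [InnerProductSpace ℝ M]
  {G : Type*} (ρ : G → M →ₗᵢ[ℝ] M)

theorem inner_apply_le (x y : M) (g : G) : ⟪x, ρ g y⟫ ≤ ‖x‖ * ‖y‖ :=
  (real_inner_le_norm _ _).trans_eq (by rw [(ρ g).norm_map])

theorem bddAbove_range_inner_apply (x y : M) : BddAbove (Set.range fun g => ⟪x, ρ g y⟫) :=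
  ⟨‖x‖ * ‖y‖, Set.forall_mem_range.2 (inner_apply_le ρ x y)⟩

variable [Nonempty G]

theorem iSup_inner_apply_le (x y : M) : ⨆ g, ⟪x, ρ g y⟫ ≤ ‖x‖ * ‖y‖ :=
  ciSup_le (inner_apply_le ρ x y)

theorem iInf_norm_smul_sub_apply_sq {v : M} (hv : ‖v‖ = 1) {r : ℝ} (hr : 0 ≤ r) (y : M) :
    ⨅ g, ‖r • v - ρ g y‖ ^ 2 = r ^ 2 - 2 * r * (⨆ g, ⟪v, ρ g y⟫) + ‖y‖ ^ 2 := by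
  have hexpand : ∀ g, ‖r • v - ρ g y‖ ^ 2 = r ^ 2 - 2 * r * ⟪v, ρ g y⟫ + ‖y‖ ^ 2 := fun g => by
    rw [norm_sub_sq_real, norm_smul, real_inner_smul_left, (ρ g).norm_map, hv,
      Real.norm_of_nonneg hr]
    ring
  simp_rw [hexpand]
  have hanti : Antitone fun z : ℝ => r ^ 2 - 2 * r * z + ‖y‖ ^ 2 := fun a b hab => by
    nlinarith
  exact (hanti.map_ciSup_of_continuousAt (by fun_prop) (bddAbove_range_inner_apply ρ v y)).symm

theorem abs_iSup_inner_apply_add_smul_sub_le (v a e : M) {σ : ℝ} (hσ : 0 ≤ σ) :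
    |(⨆ g, ⟪v, ρ g (a + σ • e)⟫) - σ * ⨆ g, ⟪v, ρ g e⟫| ≤ ‖v‖ * ‖a‖ := by
  rw [Real.mul_iSup_of_nonneg hσ]
  refine abs_ciSup_sub_ciSup_le (bddAbove_range_inner_apply ρ v _)
    ⟨σ * (‖v‖ * ‖e‖), Set.forall_mem_range.2 fun g =>
      mul_le_mul_of_nonneg_left (inner_apply_le ρ v e g) hσ⟩ fun g => ?_
  rw [map_add, map_smul, inner_add_right, real_inner_smul_right, add_sub_cancel_right]
  exact (abs_real_inner_le_norm _ _).trans_eq (by rw [(ρ g).norm_map])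

theorem iSup_inner_apply_add_iSup_inner_neg_apply_nonneg (v e : M) :
    0 ≤ (⨆ g, ⟪v, ρ g e⟫) + ⨆ g, ⟪-v, ρ g e⟫ := by
  obtain ⟨g⟩ := ‹Nonempty G›
  have h := add_le_add (le_ciSup (bddAbove_range_inner_apply ρ v e) g)
    (le_ciSup (bddAbove_range_inner_apply ρ (-v) e) g)
  rwa [inner_neg_left, add_neg_cancel] at h

end IsometryFamily

section Expectation

variable {M : Type*} [NormedAddCommGroup M] [InnerProductSpace ℝ M]
  {G : Type*} [Nonempty G] (ρ : G → M →ₗᵢ[ℝ] M)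
  {Ω : Type*} [MeasurableSpace Ω] (μ : Measure Ω)

theorem integral_iInf_norm_smul_sub_apply_sq [IsProbabilityMeasure μ] {v : M} (hv : ‖v‖ = 1)
    {r : ℝ} (hr : 0 ≤ r) {Y : Ω → M} (hY : Integrable (fun ω => ‖Y ω‖ ^ 2) μ)
    (hsup : Integrable (fun ω => ⨆ g, ⟪v, ρ g (Y ω)⟫) μ) :
    ∫ ω, ⨅ g, ‖r • v - ρ g (Y ω)‖ ^ 2 ∂μ
      = r ^ 2 - 2 * r * (∫ ω, ⨆ g, ⟪v, ρ g (Y ω)⟫ ∂μ) + ∫ ω, ‖Y ω‖ ^ 2 ∂μ := by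
  have hquad : Integrable (fun ω => r ^ 2 - 2 * r * ⨆ g, ⟪v, ρ g (Y ω)⟫) μ :=
    (integrable_const _).sub (hsup.const_mul _)
  simp_rw [iInf_norm_smul_sub_apply_sq ρ hv hr]
  rw [integral_add hquad hY,
    integral_sub (integrable_const _) (hsup.const_mul _), integral_const_mul]
  simp

theorem abs_integral_iSup_inner_apply_add_smul_sub_le [IsProbabilityMeasure μ] (v : M)
    {a e : Ω → M} {C : ℝ} (ha : ∀ ω, ‖a ω‖ ≤ C) {σ : ℝ} (hσ : 0 ≤ σ)
    (hY : Integrable (fun ω => ⨆ g, ⟪v, ρ g (a ω + σ • e ω)⟫) μ)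
    (he : Integrable (fun ω => ⨆ g, ⟪v, ρ g (e ω)⟫) μ) :
    |(∫ ω, ⨆ g, ⟪v, ρ g (a ω + σ • e ω)⟫ ∂μ) - σ * ∫ ω, ⨆ g, ⟪v, ρ g (e ω)⟫ ∂μ|
      ≤ ‖v‖ * C := by
  rw [← integral_const_mul, ← integral_sub hY (he.const_mul σ), ← Real.norm_eq_abs]
  refine (norm_integral_le_of_norm_le_const (C := ‖v‖ * C)
    (Filter.Eventually.of_forall fun ω => ?_)).trans_eq (by rw [probReal_univ, mul_one])
  exact (abs_iSup_inner_apply_add_smul_sub_le ρ v (a ω) (e ω) hσ).trans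
    (mul_le_mul_of_nonneg_left (ha ω) (norm_nonneg v))

theorem integral_iSup_inner_apply_le (v : M) {e : Ω → M} (he : Integrable e μ)
    (hsup : Integrable (fun ω => ⨆ g, ⟪v, ρ g (e ω)⟫) μ) :
    ∫ ω, ⨆ g, ⟪v, ρ g (e ω)⟫ ∂μ ≤ ‖v‖ * ∫ ω, ‖e ω‖ ∂μ := by
  rw [← integral_const_mul]
  exact integral_mono hsup (he.norm.const_mul _) fun ω => iSup_inner_apply_le ρ v (e ω)

theorem integral_iSup_inner_apply_add_integral_iSup_inner_neg_apply_nonneg (v : M) {e : Ω → M}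
    (hsup : Integrable (fun ω => ⨆ g, ⟪v, ρ g (e ω)⟫) μ)
    (hsup' : Integrable (fun ω => ⨆ g, ⟪-v, ρ g (e ω)⟫) μ) :
    0 ≤ (∫ ω, ⨆ g, ⟪v, ρ g (e ω)⟫ ∂μ) + ∫ ω, ⨆ g, ⟪-v, ρ g (e ω)⟫ ∂μ := by
  rw [← integral_add hsup hsup']
  exact integral_nonneg fun ω => iSup_inner_apply_add_iSup_inner_neg_apply_nonneg ρ v (e ω)

theorem bddAbove_range_integral_iSup_inner_apply {e : Ω → M} (he : Integrable e μ)
    (hsup : ∀ v : M, ‖v‖ = 1 → Integrable (fun ω => ⨆ g, ⟪v, ρ g (e ω)⟫) μ) :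
    BddAbove (Set.range fun v : {v : M // ‖v‖ = 1} => ∫ ω, ⨆ g, ⟪v.1, ρ g (e ω)⟫ ∂μ) :=
  ⟨∫ ω, ‖e ω‖ ∂μ, Set.forall_mem_range.2 fun v => by
    simpa [v.2] using integral_iSup_inner_apply_le ρ μ v.1 he (hsup v.1 v.2)⟩

theorem iSup_integral_iSup_inner_apply_nonneg {e : Ω → M} (he : Integrable e μ)
    (hsup : ∀ v : M, ‖v‖ = 1 → Integrable (fun ω => ⨆ g, ⟪v, ρ g (e ω)⟫) μ) :
    0 ≤ ⨆ v : {v : M // ‖v‖ = 1}, ∫ ω, ⨆ g, ⟪v.1, ρ g (e ω)⟫ ∂μ := by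
  rcases isEmpty_or_nonempty {v : M // ‖v‖ = 1} with _ | ⟨v, hv⟩
  · rw [Real.iSup_of_isEmpty]
  have hv' : ‖-v‖ = 1 := by rwa [norm_neg]
  have hbdd := bddAbove_range_integral_iSup_inner_apply ρ μ he hsup
  have h := integral_iSup_inner_apply_add_integral_iSup_inner_neg_apply_nonneg ρ μ v
    (hsup v hv) (hsup (-v) hv')
  linarith [le_ciSup hbdd ⟨v, hv⟩, le_ciSup hbdd ⟨-v, hv'⟩]

end Expectation

theorem max_sq_sub_two_mul_max (j : ℝ) : max j 0 ^ 2 - 2 * max j 0 * j = -max j 0 ^ 2 := by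
  rcases le_total j 0 with h | h
  · simp [h]
  · rw [max_eq_left h]; ring

theorem eq_max_of_sq_sub_two_mul_le {S j : ℝ} (hS : 0 ≤ S)
    (h : S ^ 2 - 2 * S * j ≤ max j 0 ^ 2 - 2 * max j 0 * j) : S = max j 0 := by
  rcases le_total j 0 with hj | hj
  · rw [max_eq_right hj] at h ⊢; nlinarith
  · rw [max_eq_left hj] at h ⊢; nlinarith

section Minimizer

variable {M : Type*} [NormedAddCommGroup M] [NormedSpace ℝ M]

def RayQuadratic (F J : M → ℝ) (c : ℝ) : Prop :=
  ∀ v, ‖v‖ = 1 → ∀ r, 0 ≤ r → F (r • v) = r ^ 2 - 2 * r * J v + c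

variable {F J : M → ℝ} {c : ℝ} {m : M}

theorem RayQuadratic.norm_eq_max_of_isMinOn (hF : RayQuadratic F J c)
    (hmin : IsMinOn F Set.univ m) {u : M} (hu : ‖u‖ = 1) (hmu : m = ‖m‖ • u) :
    ‖m‖ = max (J u) 0 := by
  refine eq_max_of_sq_sub_two_mul_le (norm_nonneg m) ?_
  have h := isMinOn_univ_iff.1 hmin (max (J u) 0 • u)
  rw [hF u hu _ (le_max_right _ _)] at h
  nth_rewrite 1 [hmu] at h
  rw [hF u hu _ (norm_nonneg m)] at h
  linarith

theorem RayQuadratic.le_norm_of_isMinOn (hF : RayQuadratic F J c)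
    (hmin : IsMinOn F Set.univ m) {v : M} (hv : ‖v‖ = 1) : J v ≤ ‖m‖ := by
  obtain ⟨u, hu, hmu⟩ : ∃ u : M, ‖u‖ = 1 ∧ m = ‖m‖ • u := by
    rcases eq_or_ne m 0 with rfl | hm
    · exact ⟨v, hv, by simp⟩
    · exact ⟨‖m‖⁻¹ • m, norm_smul_inv_norm hm, (smul_inv_smul₀ (norm_ne_zero_iff.2 hm) m).symm⟩
  have hnorm := hF.norm_eq_max_of_isMinOn hmin hu hmu
  have hFm : F m = c - ‖m‖ ^ 2 := by
    rw [hmu, hF u hu _ (norm_nonneg _), norm_smul, norm_norm, hu, mul_one, hnorm,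
      max_sq_sub_two_mul_max]
    ring
  have hFv := isMinOn_univ_iff.1 hmin (max (J v) 0 • v)
  rw [hF v hv _ (le_max_right _ _), max_sq_sub_two_mul_max, hFm] at hFv
  have hsq : max (J v) 0 ^ 2 ≤ ‖m‖ ^ 2 := by linarith
  exact (le_max_left _ _).trans ((sq_le_sq₀ (le_max_right _ _) (norm_nonneg m)).1 hsq)

theorem RayQuadratic.norm_le_of_isMinOn (hF : RayQuadratic F J c)
    (hmin : IsMinOn F Set.univ m) {b : ℝ} (hJb : ∀ v, ‖v‖ = 1 → J v ≤ b) (hb : 0 ≤ b) :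
    ‖m‖ ≤ b := by
  rcases eq_or_ne m 0 with rfl | hm
  · simpa using hb
  rw [hF.norm_eq_max_of_isMinOn hmin (norm_smul_inv_norm hm)
    (smul_inv_smul₀ (norm_ne_zero_iff.2 hm) m).symm]
  exact max_le (hJb _ (norm_smul_inv_norm hm)) hb

end Minimizer

theorem stmt6_general {M : Type*} [NormedAddCommGroup M] [InnerProductSpace ℝ M]
    {G : Type*} [Group G] (ρ : G →* (M →ₗᵢ[ℝ] M))
    {Ω : Type*} [MeasureSpace Ω] [IsProbabilityMeasure (ℙ : Measure Ω)]
    (t₀ : M) (σ : ℝ) (hσ : 0 < σ)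
    (Φ : Ω → G) (ε : Ω → M)
    (hint : Integrable ε)
    (hY2 : Integrable (fun ω => ‖ρ (Φ ω) t₀ + σ • ε ω‖ ^ 2))
    (hintsupε : ∀ v : M, ‖v‖ = 1 → Integrable (fun ω => ⨆ g : G, ⟪v, ρ g (ε ω)⟫))
    (hintsupY : ∀ v : M, ‖v‖ = 1 →
      Integrable (fun ω => ⨆ g : G, ⟪v, ρ g (ρ (Φ ω) t₀ + σ • ε ω)⟫))
    (F : M → ℝ)
    (hF : ∀ x, F x = ∫ ω, ⨅ g : G, ‖x - ρ g (ρ (Φ ω) t₀ + σ • ε ω)‖ ^ 2)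
    (K : ℝ) (hK : K = ⨆ v : {v : M // ‖v‖ = 1}, ∫ ω, ⨆ g : G, ⟪v.1, ρ g (ε ω)⟫)
    (mstar : M) (hmin : ∀ x, F mstar ≤ F x) :
    σ * K - ‖t₀‖ ≤ ‖mstar‖ ∧ ‖mstar‖ ≤ σ * K + ‖t₀‖ := by
  have hray : RayQuadratic F (fun v => ∫ ω, ⨆ g : G, ⟪v, ρ g (ρ (Φ ω) t₀ + σ • ε ω)⟫)
      (∫ ω, ‖ρ (Φ ω) t₀ + σ • ε ω‖ ^ 2) := fun v hv r hr => by
    rw [hF, integral_iInf_norm_smul_sub_apply_sq ρ ℙ hv hr hY2 (hintsupY v hv)]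
  have hmin' : IsMinOn F Set.univ mstar := isMinOn_univ_iff.2 hmin
  have hsandwich : ∀ v : M, ‖v‖ = 1 →
      |(∫ ω, ⨆ g : G, ⟪v, ρ g (ρ (Φ ω) t₀ + σ • ε ω)⟫) - σ * ∫ ω, ⨆ g : G, ⟪v, ρ g (ε ω)⟫|
        ≤ ‖t₀‖ := fun v hv => by
    simpa [hv] using abs_integral_iSup_inner_apply_add_smul_sub_le ρ ℙ v
      (fun ω => ((ρ (Φ ω)).norm_map t₀).le) hσ.le (hintsupY v hv) (hintsupε v hv)
  have hK0 : 0 ≤ K := hK ▸ iSup_integral_iSup_inner_apply_nonneg ρ ℙ hint hintsupε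
  constructor
  · have hσK : σ * K ≤ ‖mstar‖ + ‖t₀‖ := by
      rw [hK, Real.mul_iSup_of_nonneg hσ.le]
      refine Real.iSup_le (fun v => ?_) (by positivity)
      linarith [hray.le_norm_of_isMinOn hmin' v.2, (abs_sub_le_iff.1 (hsandwich v.1 v.2)).2]
    linarith
  · refine hray.norm_le_of_isMinOn hmin' (fun v hv => ?_)
      (add_nonneg (mul_nonneg hσ.le hK0) (norm_nonneg t₀))
    have hvK : ∫ ω, ⨆ g : G, ⟪v, ρ g (ε ω)⟫ ≤ K := hK ▸
      le_ciSup (bddAbove_range_integral_iSup_inner_apply ρ ℙ hint hintsupε) ⟨v, hv⟩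
    linarith [(abs_sub_le_iff.1 (hsandwich v hv)).1, mul_le_mul_of_nonneg_left hvK hσ.le]

/-- In the generative model `Y = Φ·t₀ + σε` with an isometric linear group
action, any minimizer `m⋆` of the variance `F` in the quotient space satisfies
`σK - ‖t₀‖ ≤ ‖m⋆‖ ≤ σK + ‖t₀‖`, where `K = sup_{‖v‖=1} E(sup_g ⟪v, g·ε⟫)`. -/
theorem stmt6 {M : Type*} [NormedAddCommGroup M] [InnerProductSpace ℝ M]
    [MeasurableSpace M] [BorelSpace M]
    {G : Type*} [Group G] [MeasurableSpace G] (ρ : G →* (M →ₗᵢ[ℝ] M))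
    {Ω : Type*} [MeasureSpace Ω] [IsProbabilityMeasure (ℙ : Measure Ω)]
    (t₀ : M) (σ : ℝ) (hσ : 0 < σ)
    (Φ : Ω → G) (ε : Ω → M) (hindep : IndepFun Φ ε)
    (hmeas : AEStronglyMeasurable ε ℙ)
    (hint : Integrable ε) (hmean : (∫ ω, ε ω) = 0)
    (hvar : (∫ ω, ‖ε ω‖ ^ 2) = 1)
    (hY2 : Integrable (fun ω => ‖ρ (Φ ω) t₀ + σ • ε ω‖ ^ 2))
    (hintsupε : ∀ v : M, ‖v‖ = 1 → Integrable (fun ω => ⨆ g : G, ⟪v, ρ g (ε ω)⟫))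
    (hintsupY : ∀ v : M, ‖v‖ = 1 →
      Integrable (fun ω => ⨆ g : G, ⟪v, ρ g (ρ (Φ ω) t₀ + σ • ε ω)⟫))
    (F : M → ℝ)
    (hF : ∀ x, F x = ∫ ω, ⨅ g : G, ‖x - ρ g (ρ (Φ ω) t₀ + σ • ε ω)‖ ^ 2)
    (hFint : ∀ x, Integrable (fun ω => ⨅ g : G, ‖x - ρ g (ρ (Φ ω) t₀ + σ • ε ω)‖ ^ 2))
    (K : ℝ) (hK : K = ⨆ v : {v : M // ‖v‖ = 1}, ∫ ω, ⨆ g : G, ⟪v.1, ρ g (ε ω)⟫)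
    (mstar : M) (hmin : ∀ x, F mstar ≤ F x) :
    σ * K - ‖t₀‖ ≤ ‖mstar‖ ∧ ‖mstar‖ ≤ σ * K + ‖t₀‖ :=
  stmt6_general ρ t₀ σ hσ Φ ε hint hY2 hintsupε hintsupY F hF K hK mstar hmin
end

section
/- Under the same generative model Y = Φ·t₀ + σε with an isometric linear action, if the support of ε is not contained in the fixed points and a Fréchet mean [m⋆] of [Y] exists (i.e., m⋆ minimizes F), then the consistency bias CB = inf_{g∈G} ‖t₀ − g·m⋆‖ satisfies σK − 2‖t₀‖ ≤ CB ≤ σK + 2‖t₀‖; consequently CB = σK + o(σ) as σ → ∞. -/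
/-!
For a unit vector `v` write `S_v(y) = sup_g ⟪v, g • y⟫`. Expanding the square,
`inf_g ‖r v - g y‖² = r² + ‖y‖² - 2 r S_v(y)` for `r ≥ 0`, so on each ray `F` is the quadratic
`r² - 2 r λ(v) + E‖Y‖²` with `λ(v) = E S_v(Y)`; comparing a minimiser with points on rays shows
that a Fréchet mean has norm exactly `sup_v λ(v)`. As `S_v` is positively homogeneous and
1-Lipschitz, and `Φ·t₀` has norm `‖t₀‖`, we get `|λ(v) - σ E S_v(ε)| ≤ ‖t₀‖`, hence
`|‖m⋆‖ - σK| ≤ ‖t₀‖`. Finally the quotient distance from `t₀` to `m⋆` is within `‖t₀‖` of `‖m⋆‖`.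
-/

open MeasureTheory ProbabilityTheory RealInnerProductSpace Filter Asymptotics Set

lemma abs_sub_ciSup_le_of_isLUB {ι : Type*} {f g : ι → ℝ} {a C : ℝ}
    (ha : IsLUB (range f) a) (h : ∀ i, |f i - g i| ≤ C) : |a - ⨆ i, g i| ≤ C := by
  obtain ⟨_, i₀, -⟩ := ha.nonempty
  have : Nonempty ι := ⟨i₀⟩
  have hg : ∀ i, g i ≤ a + C := fun i => by
    linarith [ha.1 (mem_range_self i), (abs_le.mp (h i)).1]
  have hbdd : BddAbove (range g) := ⟨a + C, forall_mem_range.mpr hg⟩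
  have ha_le : a ≤ (⨆ i, g i) + C := ha.2 <| forall_mem_range.mpr fun i => by
    linarith [(abs_le.mp (h i)).2, le_ciSup hbdd i]
  rw [abs_le]
  constructor <;> linarith [ciSup_le hg]

section OrbitSupport

variable {M : Type*} [NormedAddCommGroup M] [InnerProductSpace ℝ M]
  {G : Type*} [Group G] (ρ : G →* (M →ₗᵢ[ℝ] M))

noncomputable def orbitSupport (v y : M) : ℝ := ⨆ g : G, ⟪v, ρ g y⟫

lemma bddAbove_range_inner_orbit (v y : M) : BddAbove (range fun g : G => ⟪v, ρ g y⟫) :=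
  ⟨‖v‖ * ‖y‖, forall_mem_range.mpr fun g => by
    simpa only [(ρ g).norm_map] using real_inner_le_norm v (ρ g y)⟩

lemma inner_le_orbitSupport (v y : M) (g : G) : ⟪v, ρ g y⟫ ≤ orbitSupport ρ v y :=
  le_ciSup (bddAbove_range_inner_orbit ρ v y) g

lemma orbitSupport_smul_left (v y : M) {r : ℝ} (hr : 0 ≤ r) :
    orbitSupport ρ (r • v) y = r * orbitSupport ρ v y := by
  simp only [orbitSupport, real_inner_smul_left, Real.mul_iSup_of_nonneg hr]

lemma orbitSupport_smul_right (v y : M) {r : ℝ} (hr : 0 ≤ r) :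
    orbitSupport ρ v (r • y) = r * orbitSupport ρ v y := by
  simp only [orbitSupport, LinearIsometry.map_smul, real_inner_smul_right,
    Real.mul_iSup_of_nonneg hr]

lemma orbitSupport_add_neg_nonneg (v y : M) :
    0 ≤ orbitSupport ρ v y + orbitSupport ρ (-v) y := by
  have h₁ := inner_le_orbitSupport ρ v y 1
  have h₂ := inner_le_orbitSupport ρ (-v) y 1
  rw [inner_neg_left] at h₂
  linarith

lemma abs_orbitSupport_add_sub_le (v a y : M) :
    |orbitSupport ρ v (a + y) - orbitSupport ρ v y| ≤ ‖v‖ * ‖a‖ := by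
  refine abs_sub_ciSup_le_of_isLUB (isLUB_ciSup (bddAbove_range_inner_orbit ρ v _)) fun g => ?_
  rw [map_add, inner_add_right, add_sub_cancel_right, ← (ρ g).norm_map a]
  exact abs_real_inner_le_norm v (ρ g a)

lemma iInf_norm_sub_orbit_sq (x y : M) :
    ⨅ g : G, ‖x - ρ g y‖ ^ 2 = ‖x‖ ^ 2 + ‖y‖ ^ 2 - 2 * orbitSupport ρ x y := by
  have h : ∀ g : G, ‖x - ρ g y‖ ^ 2 = ‖x‖ ^ 2 + ‖y‖ ^ 2 - 2 * ⟪x, ρ g y⟫ := fun g => by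
    rw [norm_sub_sq_real, (ρ g).norm_map]
    ring
  simp_rw [h]
  exact (Antitone.map_ciSup_of_continuousAt (f := fun s => ‖x‖ ^ 2 + ‖y‖ ^ 2 - 2 * s)
    (by fun_prop) (fun _ _ hst => by linarith) (bddAbove_range_inner_orbit ρ x y)).symm

lemma abs_iInf_norm_sub_orbit_sub_norm_le (t m : M) :
    |(⨅ g : G, ‖t - ρ g m‖) - ‖m‖| ≤ ‖t‖ := by
  have hlow : ∀ g : G, ‖m‖ - ‖t‖ ≤ ‖t - ρ g m‖ := fun g => by
    simpa only [(ρ g).norm_map, norm_sub_rev] using norm_sub_norm_le (ρ g m) t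
  have hup : ⨅ g : G, ‖t - ρ g m‖ ≤ ‖t - m‖ := by
    simpa using ciInf_le ⟨_, forall_mem_range.mpr hlow⟩ (1 : G)
  have hinf : ‖m‖ - ‖t‖ ≤ ⨅ g : G, ‖t - ρ g m‖ := le_ciInf hlow
  rw [abs_le]
  constructor <;> linarith [norm_sub_le t m]

end OrbitSupport

section FrechetMean

variable {M : Type*} [NormedAddCommGroup M] [InnerProductSpace ℝ M]
  {G : Type*} [Group G] (ρ : G →* (M →ₗᵢ[ℝ] M))
  {Ω : Type*} [MeasurableSpace Ω] (μ : Measure Ω) (Y : Ω → M)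

noncomputable def frechetFunctional (x : M) : ℝ := ∫ ω, ⨅ g : G, ‖x - ρ g (Y ω)‖ ^ 2 ∂μ

noncomputable def meanOrbitSupport (v : M) : ℝ := ∫ ω, orbitSupport ρ v (Y ω) ∂μ

variable {μ Y}

lemma frechetFunctional_smul [IsProbabilityMeasure μ] (hY : Integrable (fun ω => ‖Y ω‖ ^ 2) μ)
    {v : M} (hv : ‖v‖ = 1) (hS : Integrable (fun ω => orbitSupport ρ v (Y ω)) μ) {r : ℝ} (hr : 0 ≤ r) :
    frechetFunctional ρ μ Y (r • v)
      = r ^ 2 - 2 * r * meanOrbitSupport ρ μ Y v + ∫ ω, ‖Y ω‖ ^ 2 ∂μ := by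
  have h : ∀ ω, ⨅ g : G, ‖r • v - ρ g (Y ω)‖ ^ 2
      = r ^ 2 - 2 * r * orbitSupport ρ v (Y ω) + ‖Y ω‖ ^ 2 := fun ω => by
    rw [iInf_norm_sub_orbit_sq, orbitSupport_smul_left ρ _ _ hr, norm_smul, hv,
      Real.norm_of_nonneg hr]
    ring
  have hlin : Integrable (fun ω => r ^ 2 - 2 * r * orbitSupport ρ v (Y ω)) μ :=
    (integrable_const _).sub (hS.const_mul _)
  simp_rw [frechetFunctional, h]
  rw [integral_add hlin hY,
    integral_sub (integrable_const _) (hS.const_mul _), integral_const_mul, integral_const,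
    probReal_univ, one_smul, meanOrbitSupport]

lemma meanOrbitSupport_add_neg_nonneg {v : M} (hv : ‖v‖ = 1)
    (hS : ∀ v : M, ‖v‖ = 1 → Integrable (fun ω => orbitSupport ρ v (Y ω)) μ) :
    0 ≤ meanOrbitSupport ρ μ Y v + meanOrbitSupport ρ μ Y (-v) := by
  rw [meanOrbitSupport, meanOrbitSupport,
    ← integral_add (hS v hv) (hS (-v) (by rw [norm_neg, hv]))]
  exact integral_nonneg fun ω => orbitSupport_add_neg_nonneg ρ v (Y ω)

lemma meanOrbitSupport_nonpos_of_isMin_zero [IsProbabilityMeasure μ]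
    (hY : Integrable (fun ω => ‖Y ω‖ ^ 2) μ)
    (hS : ∀ v : M, ‖v‖ = 1 → Integrable (fun ω => orbitSupport ρ v (Y ω)) μ)
    (hmin : ∀ x, frechetFunctional ρ μ Y 0 ≤ frechetFunctional ρ μ Y x)
    {v : M} (hv : ‖v‖ = 1) : meanOrbitSupport ρ μ Y v ≤ 0 := by
  by_contra! hpos
  have h₀ := frechetFunctional_smul ρ hY hv (hS v hv) le_rfl
  have h₁ := frechetFunctional_smul ρ hY hv (hS v hv) hpos.le
  rw [zero_smul] at h₀
  nlinarith [hmin (meanOrbitSupport ρ μ Y v • v)]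

lemma isGreatest_meanOrbitSupport_of_isMin [IsProbabilityMeasure μ]
    (hY : Integrable (fun ω => ‖Y ω‖ ^ 2) μ)
    (hS : ∀ v : M, ‖v‖ = 1 → Integrable (fun ω => orbitSupport ρ v (Y ω)) μ)
    {m : M} (hmin : ∀ x, frechetFunctional ρ μ Y m ≤ frechetFunctional ρ μ Y x) (hm : m ≠ 0) :
    IsGreatest (range fun v : {v : M // ‖v‖ = 1} => meanOrbitSupport ρ μ Y v) ‖m‖ := by
  set n := ‖m‖
  have hn : 0 < n := norm_pos_iff.mpr hm
  set u := n⁻¹ • m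
  have hu : ‖u‖ = 1 := by rw [norm_smul, norm_inv, norm_norm, inv_mul_cancel₀ hn.ne']
  have hFm : frechetFunctional ρ μ Y m
      = n ^ 2 - 2 * n * meanOrbitSupport ρ μ Y u + ∫ ω, ‖Y ω‖ ^ 2 ∂μ := by
    rw [← frechetFunctional_smul ρ hY hu (hS u hu) hn.le, smul_inv_smul₀ hn.ne']
  set l := meanOrbitSupport ρ μ Y u
  have hle : ∀ v : M, ‖v‖ = 1 → meanOrbitSupport ρ μ Y v ≤ l := fun v hv => by
    have := frechetFunctional_smul ρ hY hv (hS v hv) hn.le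
    nlinarith [hmin (n • v)]
  have hl : 0 < l := by
    have := frechetFunctional_smul ρ hY hu (hS u hu) le_rfl
    rw [zero_smul] at this
    nlinarith [hmin 0]
  have hln : l = n := by
    have := frechetFunctional_smul ρ hY hu (hS u hu) hl.le
    nlinarith [hmin (l • u)]
  exact ⟨⟨⟨u, hu⟩, hln⟩, forall_mem_range.mpr fun v => hln ▸ hle v.1 v.2⟩

lemma isLUB_meanOrbitSupport_of_isMin [Nontrivial M] [IsProbabilityMeasure μ]
    (hY : Integrable (fun ω => ‖Y ω‖ ^ 2) μ)
    (hS : ∀ v : M, ‖v‖ = 1 → Integrable (fun ω => orbitSupport ρ v (Y ω)) μ)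
    {m : M} (hmin : ∀ x, frechetFunctional ρ μ Y m ≤ frechetFunctional ρ μ Y x) :
    IsLUB (range fun v : {v : M // ‖v‖ = 1} => meanOrbitSupport ρ μ Y v) ‖m‖ := by
  rcases eq_or_ne m 0 with rfl | hm
  · obtain ⟨u, hu⟩ := exists_norm_eq M zero_le_one
    have hnu : ‖-u‖ = 1 := by rw [norm_neg, hu]
    rw [norm_zero]
    refine ⟨forall_mem_range.mpr fun v =>
      meanOrbitSupport_nonpos_of_isMin_zero ρ hY hS hmin v.2, fun b hb => ?_⟩
    linarith [hb (mem_range_self ⟨u, hu⟩), hb (mem_range_self ⟨-u, hnu⟩),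
      meanOrbitSupport_add_neg_nonneg ρ hu hS]
  · exact (isGreatest_meanOrbitSupport_of_isMin ρ hY hS hmin hm).isLUB

lemma abs_meanOrbitSupport_add_smul_sub_le [IsProbabilityMeasure μ] {Z ε : Ω → M} {C σ : ℝ}
    (hσ : 0 ≤ σ) (hZ : ∀ ω, ‖Z ω‖ ≤ C) {v : M} (hv : ‖v‖ = 1)
    (hZε : Integrable (fun ω => orbitSupport ρ v (Z ω + σ • ε ω)) μ)
    (hε : Integrable (fun ω => orbitSupport ρ v (ε ω)) μ) :
    |meanOrbitSupport ρ μ (fun ω => Z ω + σ • ε ω) v - σ * meanOrbitSupport ρ μ ε v| ≤ C := by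
  have hσε : ∀ ω, orbitSupport ρ v (σ • ε ω) = σ * orbitSupport ρ v (ε ω) := fun ω =>
    orbitSupport_smul_right ρ v (ε ω) hσ
  rw [meanOrbitSupport, meanOrbitSupport, ← integral_const_mul,
    ← integral_sub hZε (hε.const_mul σ), ← Real.norm_eq_abs]
  refine (norm_integral_le_of_norm_le_const (Eventually.of_forall fun ω => ?_)).trans_eq
    (by rw [probReal_univ, mul_one])
  rw [← hσε, Real.norm_eq_abs]
  exact (abs_orbitSupport_add_sub_le ρ v (Z ω) (σ • ε ω)).trans (by rw [hv, one_mul]; exact hZ ω)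

end FrechetMean

theorem stmt7_general {M : Type*} [NormedAddCommGroup M] [InnerProductSpace ℝ M]
    {G : Type*} [Group G] (ρ : G →* (M →ₗᵢ[ℝ] M))
    {Ω : Type*} [MeasureSpace Ω] [IsProbabilityMeasure (ℙ : Measure Ω)]
    (t₀ : M) (Φ : Ω → G) (ε : Ω → M)
    (hY2 : ∀ σ : ℝ, Integrable (fun ω => ‖ρ (Φ ω) t₀ + σ • ε ω‖ ^ 2))
    (hintsupε : ∀ v : M, ‖v‖ = 1 → Integrable (fun ω => ⨆ g : G, ⟪v, ρ g (ε ω)⟫))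
    (hintsupY : ∀ σ : ℝ, ∀ v : M, ‖v‖ = 1 →
      Integrable (fun ω => ⨆ g : G, ⟪v, ρ g (ρ (Φ ω) t₀ + σ • ε ω)⟫))
    (F : ℝ → M → ℝ)
    (hF : ∀ σ x, F σ x = ∫ ω, ⨅ g : G, ‖x - ρ g (ρ (Φ ω) t₀ + σ • ε ω)‖ ^ 2)
    (K : ℝ) (hK : K = ⨆ v : {v : M // ‖v‖ = 1}, ∫ ω, ⨆ g : G, ⟪v.1, ρ g (ε ω)⟫)
    (mstar : ℝ → M) (hmin : ∀ σ > (0 : ℝ), ∀ x, F σ (mstar σ) ≤ F σ x)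
    (CB : ℝ → ℝ) (hCB : ∀ σ, CB σ = ⨅ g : G, ‖t₀ - ρ g (mstar σ)‖) :
    (∀ σ > (0 : ℝ), σ * K - 2 * ‖t₀‖ ≤ CB σ ∧ CB σ ≤ σ * K + 2 * ‖t₀‖) ∧
      (fun σ => CB σ - σ * K) =o[atTop] (fun σ : ℝ => σ) := by
  have hbound : ∀ σ > (0 : ℝ), |CB σ - σ * K| ≤ 2 * ‖t₀‖ := by
    intro σ hσ
    rcases subsingleton_or_nontrivial M with hM | hM
    · simp [hCB, hK, Subsingleton.elim _ (0 : M)]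
    have hlub := isLUB_meanOrbitSupport_of_isMin ρ (hY2 σ) (hintsupY σ)
      fun x => by simpa only [hF, frechetFunctional] using hmin σ hσ x
    have hmK : |‖mstar σ‖ - σ * K| ≤ ‖t₀‖ := by
      rw [hK, Real.mul_iSup_of_nonneg hσ.le]
      refine abs_sub_ciSup_le_of_isLUB hlub fun v => ?_
      exact abs_meanOrbitSupport_add_smul_sub_le ρ hσ.le (fun ω => (ρ (Φ ω)).norm_map t₀ |>.le)
        v.2 (hintsupY σ v.1 v.2) (hintsupε v.1 v.2)
    calc |CB σ - σ * K| ≤ |CB σ - ‖mstar σ‖| + |‖mstar σ‖ - σ * K| := abs_sub_le _ _ _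
      _ ≤ ‖t₀‖ + ‖t₀‖ := by
        gcongr
        rw [hCB]
        exact abs_iInf_norm_sub_orbit_sub_norm_le ρ t₀ (mstar σ)
      _ = 2 * ‖t₀‖ := by ring
  refine ⟨fun σ hσ => ?_, ?_⟩
  · have := abs_le.mp (hbound σ hσ)
    constructor <;> linarith
  · refine (IsBigO.of_bound (2 * ‖t₀‖) ?_).trans_isLittleO (isLittleO_const_id_atTop (1 : ℝ))
    filter_upwards [eventually_gt_atTop 0] with σ hσ
    simpa using hbound σ hσ

/-- In the generative model `Y = Φ·t₀ + σε` with an isometric linear group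
action, if for each noise level `σ > 0` a Fréchet mean `m⋆(σ)` of `[Y]` exists,
then the consistency bias `CB(σ) = inf_g ‖t₀ - g·m⋆(σ)‖` satisfies
`σK - 2‖t₀‖ ≤ CB(σ) ≤ σK + 2‖t₀‖`; consequently `CB(σ) = σK + o(σ)` as
`σ → ∞`. -/
theorem stmt7 {M : Type*} [NormedAddCommGroup M] [InnerProductSpace ℝ M]
    [MeasurableSpace M] [BorelSpace M]
    {G : Type*} [Group G] [MeasurableSpace G] (ρ : G →* (M →ₗᵢ[ℝ] M))
    {Ω : Type*} [MeasureSpace Ω] [IsProbabilityMeasure (ℙ : Measure Ω)]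
    (t₀ : M) (Φ : Ω → G) (ε : Ω → M) (hindep : IndepFun Φ ε)
    (hmeas : AEStronglyMeasurable ε ℙ)
    (hint : Integrable ε) (hmean : (∫ ω, ε ω) = 0)
    (hvar : (∫ ω, ‖ε ω‖ ^ 2) = 1)
    (hsupp : ∃ x : M, (∀ r > 0, 0 < ℙ (ε ⁻¹' Metric.ball x r)) ∧ ∃ g : G, ρ g x ≠ x)
    (hY2 : ∀ σ : ℝ, Integrable (fun ω => ‖ρ (Φ ω) t₀ + σ • ε ω‖ ^ 2))
    (hintsupε : ∀ v : M, ‖v‖ = 1 → Integrable (fun ω => ⨆ g : G, ⟪v, ρ g (ε ω)⟫))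
    (hintsupY : ∀ σ : ℝ, ∀ v : M, ‖v‖ = 1 →
      Integrable (fun ω => ⨆ g : G, ⟪v, ρ g (ρ (Φ ω) t₀ + σ • ε ω)⟫))
    (F : ℝ → M → ℝ)
    (hF : ∀ σ x, F σ x = ∫ ω, ⨅ g : G, ‖x - ρ g (ρ (Φ ω) t₀ + σ • ε ω)‖ ^ 2)
    (hFint : ∀ (σ : ℝ) (x : M), Integrable (fun ω => ⨅ g : G, ‖x - ρ g (ρ (Φ ω) t₀ + σ • ε ω)‖ ^ 2))
    (K : ℝ) (hK : K = ⨆ v : {v : M // ‖v‖ = 1}, ∫ ω, ⨆ g : G, ⟪v.1, ρ g (ε ω)⟫)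
    (mstar : ℝ → M) (hmin : ∀ σ > (0 : ℝ), ∀ x, F σ (mstar σ) ≤ F σ x)
    (CB : ℝ → ℝ) (hCB : ∀ σ, CB σ = ⨅ g : G, ‖t₀ - ρ g (mstar σ)‖) :
    (∀ σ > (0 : ℝ), σ * K - 2 * ‖t₀‖ ≤ CB σ ∧ CB σ ≤ σ * K + 2 * ‖t₀‖) ∧
      (fun σ => CB σ - σ * K) =o[atTop] (fun σ : ℝ => σ) :=
  stmt7_general ρ t₀ Φ ε hY2 hintsupε hintsupY F hF K hK mstar hmin CB hCB
end

section
/- In the isometric setting with Y = Φ·t₀ + σε, the function λ(v) = E(sup_{g∈G} ⟨v, g·Y⟩) satisfies sup_{‖v‖=1} λ(v) ≥ 0; moreover, if m⋆ and n⋆ are representatives of any two (possibly distinct) Fréchet means of [Y], then ‖m⋆‖ = ‖n⋆‖ = sup_{‖v‖=1} λ(v). -/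
open MeasureTheory ProbabilityTheory RealInnerProductSpace

/-!
Expanding the square, `inf_g ‖x - g·Y‖² = ‖x‖² + ‖Y‖² - 2 sup_g ⟪x, g·Y⟫`, so that
`F x = ‖x‖² + E‖Y‖² - 2 λ(x)` with `λ` positively homogeneous. Hence `λ x ≤ ‖x‖ Λ`, which gives
`F m ≥ E‖Y‖² + ‖m‖² - 2 ‖m‖ Λ`, while comparing a minimiser `m` with the points `Λ v`, `‖v‖ = 1`,
gives `F m ≤ E‖Y‖² - Λ²`. Together, `(‖m‖ - Λ)² ≤ 0`. Finally `Λ ≥ 0` because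
`λ(v) + λ(-v) ≥ 0`.
-/

section UnitSphereSup

variable {E : Type*} [NormedAddCommGroup E] {lam : E → ℝ}

lemma le_norm_mul_iSup_unit [NormedSpace ℝ E]
    (hsmul : ∀ c : ℝ, 0 ≤ c → ∀ x, lam (c • x) = c * lam x)
    (hbdd : BddAbove (Set.range fun v : {v : E // ‖v‖ = 1} => lam v)) (x : E) :
    lam x ≤ ‖x‖ * ⨆ v : {v : E // ‖v‖ = 1}, lam v := by
  rcases eq_or_ne x 0 with rfl | hx
  · simpa using (hsmul 0 le_rfl 0).le
  · have hx' : ‖x‖ ≠ 0 := norm_ne_zero_iff.mpr hx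
    have hunit : ‖‖x‖⁻¹ • x‖ = 1 := by
      rw [norm_smul, norm_inv, norm_norm, inv_mul_cancel₀ hx']
    calc lam x = ‖x‖ * lam (‖x‖⁻¹ • x) := by
          rw [← hsmul _ (norm_nonneg x), smul_smul, mul_inv_cancel₀ hx', one_smul]
      _ ≤ ‖x‖ * ⨆ v : {v : E // ‖v‖ = 1}, lam v :=
          mul_le_mul_of_nonneg_left (le_ciSup hbdd ⟨_, hunit⟩) (norm_nonneg x)

lemma iSup_unit_nonneg (hbdd : BddAbove (Set.range fun v : {v : E // ‖v‖ = 1} => lam v))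
    (hneg : ∀ v, 0 ≤ lam v + lam (-v)) : 0 ≤ ⨆ v : {v : E // ‖v‖ = 1}, lam v := by
  rcases isEmpty_or_nonempty {v : E // ‖v‖ = 1} with _ | ⟨v, hv⟩
  · exact (Real.iSup_of_isEmpty _).ge
  · have h₁ := le_ciSup hbdd ⟨v, hv⟩
    have h₂ := le_ciSup hbdd ⟨-v, by rwa [norm_neg]⟩
    linarith [hneg v]

lemma norm_eq_iSup_unit_of_forall_le [NormedSpace ℝ E]
    (hsmul : ∀ c : ℝ, 0 ≤ c → ∀ x, lam (c • x) = c * lam x)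
    (hbdd : BddAbove (Set.range fun v : {v : E // ‖v‖ = 1} => lam v))
    (hnonneg : 0 ≤ ⨆ v : {v : E // ‖v‖ = 1}, lam v) {m : E}
    (hmin : ∀ x, ‖m‖ ^ 2 - 2 * lam m ≤ ‖x‖ ^ 2 - 2 * lam x) :
    ‖m‖ = ⨆ v : {v : E // ‖v‖ = 1}, lam v := by
  set Λ := ⨆ v : {v : E // ‖v‖ = 1}, lam v
  have hlow : lam m ≤ ‖m‖ * Λ := le_norm_mul_iSup_unit hsmul hbdd m
  have hup : 2 * Λ * Λ ≤ Λ ^ 2 - ‖m‖ ^ 2 + 2 * lam m := by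
    have hzero : lam 0 = 0 := by simpa using hsmul 0 le_rfl 0
    have hm0 : ‖m‖ ^ 2 - 2 * lam m ≤ 0 := by simpa [hzero] using hmin 0
    have hradial : ∀ v : {v : E // ‖v‖ = 1}, 2 * Λ * lam v ≤ Λ ^ 2 - ‖m‖ ^ 2 + 2 * lam m := by
      intro v
      have := hmin (Λ • v.1)
      rw [hsmul Λ hnonneg, norm_smul, v.2, mul_one, Real.norm_eq_abs, sq_abs] at this
      linarith
    calc 2 * Λ * Λ = ⨆ v : {v : E // ‖v‖ = 1}, 2 * Λ * lam v :=
          Real.mul_iSup_of_nonneg (by positivity) _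
      _ ≤ Λ ^ 2 - ‖m‖ ^ 2 + 2 * lam m :=
          Real.iSup_le hradial (by nlinarith [sq_nonneg Λ])
  have hsq : (‖m‖ - Λ) ^ 2 = 0 := by nlinarith [sq_nonneg (‖m‖ - Λ), norm_nonneg m]
  exact sub_eq_zero.mp (pow_eq_zero_iff two_ne_zero |>.mp hsq)

end UnitSphereSup

section Orbit

variable {ι M : Type*} [NormedAddCommGroup M] [InnerProductSpace ℝ M] (T : ι → M →ₗᵢ[ℝ] M)

lemma bddAbove_range_inner_linearIsometry (x y : M) :
    BddAbove (Set.range fun i => ⟪x, T i y⟫) := by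
  refine ⟨‖x‖ * ‖y‖, ?_⟩
  rintro r ⟨i, rfl⟩
  simpa only [(T i).norm_map] using real_inner_le_norm x (T i y)

lemma iInf_norm_sub_linearIsometry_sq [Nonempty ι] (x y : M) :
    ⨅ i, ‖x - T i y‖ ^ 2 = ‖x‖ ^ 2 + ‖y‖ ^ 2 - 2 * ⨆ i, ⟪x, T i y⟫ := by
  have hexpand : ∀ i, ‖x - T i y‖ ^ 2 = ‖x‖ ^ 2 + ‖y‖ ^ 2 - 2 * ⟪x, T i y⟫ := fun i => by
    rw [norm_sub_sq_real, (T i).norm_map]; ring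
  simp_rw [hexpand, Real.mul_iSup_of_nonneg zero_le_two]
  have hbdd : BddAbove (Set.range fun i => 2 * ⟪x, T i y⟫) := by
    simpa only [← smul_eq_mul, Set.range_smul] using
      (bddAbove_range_inner_linearIsometry T x y).smul_of_nonneg zero_le_two
  exact ((OrderIso.subLeft _).map_ciSup hbdd).symm

lemma iSup_inner_add_iSup_inner_neg_nonneg [Nonempty ι] (x y : M) :
    0 ≤ (⨆ i, ⟪x, T i y⟫) + ⨆ i, ⟪-x, T i y⟫ := by
  obtain ⟨i⟩ := ‹Nonempty ι›
  have h₁ := le_ciSup (bddAbove_range_inner_linearIsometry T x y) i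
  have h₂ := le_ciSup (bddAbove_range_inner_linearIsometry T (-x) y) i
  rw [inner_neg_left] at h₂
  linarith

variable {Ω : Type*} [MeasurableSpace Ω] (μ : Measure Ω) (Y : Ω → M)

lemma integrable_iSup_inner_linearIsometry [IsFiniteMeasure μ] [Nonempty ι] {x : M}
    (hY : Integrable (fun ω => ‖Y ω‖ ^ 2) μ)
    (hx : Integrable (fun ω => ⨅ i, ‖x - T i (Y ω)‖ ^ 2) μ) :
    Integrable (fun ω => ⨆ i, ⟪x, T i (Y ω)⟫) μ := by
  refine ((((integrable_const (‖x‖ ^ 2)).add hY).sub hx).div_const 2).congr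
    (Filter.Eventually.of_forall fun ω => ?_)
  simp only [Pi.sub_apply, Pi.add_apply, iInf_norm_sub_linearIsometry_sq]
  ring

lemma integral_iInf_norm_sub_linearIsometry_sq [IsProbabilityMeasure μ] [Nonempty ι] {x : M}
    (hY : Integrable (fun ω => ‖Y ω‖ ^ 2) μ)
    (hx : Integrable (fun ω => ⨅ i, ‖x - T i (Y ω)‖ ^ 2) μ) :
    ∫ ω, ⨅ i, ‖x - T i (Y ω)‖ ^ 2 ∂μ
      = ‖x‖ ^ 2 + ∫ ω, ‖Y ω‖ ^ 2 ∂μ - 2 * ∫ ω, ⨆ i, ⟪x, T i (Y ω)⟫ ∂μ := by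
  simp_rw [iInf_norm_sub_linearIsometry_sq]
  have hsum : Integrable (fun ω => ‖x‖ ^ 2 + ‖Y ω‖ ^ 2) μ := (integrable_const _).add hY
  rw [integral_sub hsum ((integrable_iSup_inner_linearIsometry T μ Y hY hx).const_mul 2),
    integral_add (integrable_const _) hY, integral_const_mul, integral_const, probReal_univ,
    one_smul]

lemma integral_iSup_inner_smul_left {c : ℝ} (hc : 0 ≤ c) (x : M) :
    ∫ ω, ⨆ i, ⟪c • x, T i (Y ω)⟫ ∂μ = c * ∫ ω, ⨆ i, ⟪x, T i (Y ω)⟫ ∂μ := by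
  simp_rw [real_inner_smul_left, ← Real.mul_iSup_of_nonneg hc]
  exact integral_const_mul c _

end Orbit

theorem stmt9_general {M : Type*} [NormedAddCommGroup M] [InnerProductSpace ℝ M]
    {G : Type*} [Group G] (ρ : G →* (M →ₗᵢ[ℝ] M))
    {Ω : Type*} [MeasureSpace Ω] [IsProbabilityMeasure (ℙ : Measure Ω)]
    (t₀ : M) (σ : ℝ) (Φ : Ω → G) (ε : Ω → M)
    (hY2 : Integrable (fun ω => ‖ρ (Φ ω) t₀ + σ • ε ω‖ ^ 2))
    (hFint : ∀ x : M,
      Integrable (fun ω => ⨅ g : G, ‖x - ρ g (ρ (Φ ω) t₀ + σ • ε ω)‖ ^ 2))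
    (F : M → ℝ)
    (hF : ∀ x, F x = ∫ ω, ⨅ g : G, ‖x - ρ g (ρ (Φ ω) t₀ + σ • ε ω)‖ ^ 2)
    (Λ : ℝ)
    (hΛ : Λ = ⨆ v : {v : M // ‖v‖ = 1},
      ∫ ω, ⨆ g : G, ⟪v.1, ρ g (ρ (Φ ω) t₀ + σ • ε ω)⟫) :
    0 ≤ Λ ∧ ∀ mstar : M, (∀ x, F mstar ≤ F x) → ‖mstar‖ = Λ := by
  have : Nonempty G := ⟨1⟩
  set Y : Ω → M := fun ω => ρ (Φ ω) t₀ + σ • ε ω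
  set lam : M → ℝ := fun x => ∫ ω, ⨆ g, ⟪x, ρ g (Y ω)⟫
  have hsupint (x : M) := integrable_iSup_inner_linearIsometry ρ ℙ Y hY2 (hFint x)
  have hFeq (x : M) : F x = ‖x‖ ^ 2 + (∫ ω, ‖Y ω‖ ^ 2) - 2 * lam x :=
    (hF x).trans (integral_iInf_norm_sub_linearIsometry_sq ρ ℙ Y hY2 (hFint x))
  have hsmul (c : ℝ) (hc : 0 ≤ c) (x : M) : lam (c • x) = c * lam x :=
    integral_iSup_inner_smul_left ρ ℙ Y hc x
  have hbdd : BddAbove (Set.range fun v : {v : M // ‖v‖ = 1} => lam v) := by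
    refine ⟨(1 + ∫ ω, ‖Y ω‖ ^ 2) / 2, ?_⟩
    rintro r ⟨v, rfl⟩
    have hFv : 0 ≤ F v := (hF v).symm ▸
      integral_nonneg fun ω => Real.iInf_nonneg fun g => sq_nonneg _
    have hv : ‖(v : M)‖ ^ 2 = 1 := by rw [v.2, one_pow]
    linarith [hFeq v]
  have hneg (v : M) : 0 ≤ lam v + lam (-v) := by
    rw [← integral_add (hsupint v) (hsupint (-v))]
    exact integral_nonneg fun ω => iSup_inner_add_iSup_inner_neg_nonneg ρ v (Y ω)
  have hΛ0 : 0 ≤ Λ := hΛ ▸ iSup_unit_nonneg hbdd hneg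
  refine ⟨hΛ0, fun m hm => hΛ ▸ norm_eq_iSup_unit_of_forall_le hsmul hbdd (hΛ ▸ hΛ0) ?_⟩
  intro x
  linarith [hm x, hFeq m, hFeq x]

/-- In the isometric setting with `Y = Φ·t₀ + σε`, the quantity
`Λ = sup_{‖v‖=1} λ(v)` with `λ(v) = E(sup_g ⟪v, g·Y⟫)` is nonnegative, and any
representative of a Fréchet mean of `[Y]` has norm `Λ`; in particular all
Fréchet means have representatives of the same norm. -/
theorem stmt9 {M : Type*} [NormedAddCommGroup M] [InnerProductSpace ℝ M]
    [MeasurableSpace M] [BorelSpace M]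
    {G : Type*} [Group G] [MeasurableSpace G] (ρ : G →* (M →ₗᵢ[ℝ] M))
    {Ω : Type*} [MeasureSpace Ω] [IsProbabilityMeasure (ℙ : Measure Ω)]
    (t₀ : M) (σ : ℝ) (Φ : Ω → G) (ε : Ω → M) (hindep : IndepFun Φ ε)
    (hint : Integrable ε) (hmean : (∫ ω, ε ω) = 0)
    (hΦint : Integrable (fun ω => ρ (Φ ω) t₀))
    (hY2 : Integrable (fun ω => ‖ρ (Φ ω) t₀ + σ • ε ω‖ ^ 2))
    (hintsupY : ∀ v : M, ‖v‖ = 1 →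
      Integrable (fun ω => ⨆ g : G, ⟪v, ρ g (ρ (Φ ω) t₀ + σ • ε ω)⟫))
    (hFint : ∀ x : M,
      Integrable (fun ω => ⨅ g : G, ‖x - ρ g (ρ (Φ ω) t₀ + σ • ε ω)‖ ^ 2))
    (F : M → ℝ)
    (hF : ∀ x, F x = ∫ ω, ⨅ g : G, ‖x - ρ g (ρ (Φ ω) t₀ + σ • ε ω)‖ ^ 2)
    (Λ : ℝ)
    (hΛ : Λ = ⨆ v : {v : M // ‖v‖ = 1},
      ∫ ω, ⨆ g : G, ⟪v.1, ρ g (ρ (Φ ω) t₀ + σ • ε ω)⟫) :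
    0 ≤ Λ ∧ ∀ mstar : M, (∀ x, F mstar ≤ F x) → ‖mstar‖ = Λ :=
  stmt9_general ρ t₀ σ Φ ε hY2 hFint F hF Λ hΛ
end

section
/- If t₀ is a fixed point of the G-action (not necessarily isometric), the support of the standardized noise ε is not contained in the fixed points of a subgroup H ⊂ G acting isometrically, and Y = t₀ + σε, then t₀ does not minimize the pre-variance F(m) = E(inf_{g∈G} ‖g·m − Y‖²). -/
open MeasureTheory ProbabilityTheory RealInnerProductSpace

/-!
Since `t₀` is fixed by `G`, `F t₀ = σ²`, and `F ≤ F_H` where `F_H` takes the infimum over `H` only.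
Because `H` acts by linear isometries fixing `t₀`, for a unit vector `v` and `s > 0`,
`F_H (t₀ + s • v) = s² + σ² - 2 s σ S v` with `S v = E (sup_{h ∈ H} ⟪v, h • ε⟫)`; taking `s = σ S v`
shows that minimality of `t₀` forces `S v ≤ 0` for every unit `v`. But for `x` in the support of
`ε` with `h₀ • x ≠ x` and `v` the direction of `h₀ • x - x`, the integrand of `S v + S (-v)` is
nonnegative and bounded below by `⟪v, h₀ • ε - ε⟫`, which is positive whenever `ε` is close to `x`,
an event of positive probability. Hence `S v + S (-v) > 0`, a contradiction.
-/

lemma ciInf_sub_mul_eq_sub_mul_ciSup {ι : Type*} [Nonempty ι] {f : ι → ℝ} (C : ℝ) {K : ℝ}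
    (hK : 0 ≤ K) (hf : BddAbove (Set.range f)) : ⨅ i, C - K * f i = C - K * ⨆ i, f i := by
  have hanti : Antitone fun x : ℝ => C - K * x := fun _ _ hab =>
    sub_le_sub_left (mul_le_mul_of_nonneg_left hab hK) C
  exact (hanti.map_ciSup_of_continuousAt (by fun_prop) hf).symm

lemma integral_iInf_le_integral_iInf_comp {α ι ι' : Type*} [Nonempty ι'] [MeasurableSpace α]
    {μ : Measure α} (φ : ι' → ι) {f : ι → α → ℝ} (hf : ∀ i a, 0 ≤ f i a)
    (hint : Integrable (fun a => ⨅ i, f i a) μ) (hint' : Integrable (fun a => ⨅ j, f (φ j) a) μ) :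
    ∫ a, ⨅ i, f i a ∂μ ≤ ∫ a, ⨅ j, f (φ j) a ∂μ := by
  refine integral_mono hint hint' fun a => le_ciInf fun j => ?_
  exact ciInf_le ⟨0, by rintro _ ⟨i, rfl⟩; exact hf i a⟩ (φ j)

section IsometricAction

variable {M : Type*} [NormedAddCommGroup M] [InnerProductSpace ℝ M]
  {G : Type*} [Group G] [MulAction G M]

lemma integral_iInf_norm_smul_sub_sq_of_forall_smul_eq {Ω : Type*} [MeasureSpace Ω] {t₀ : M}
    (hfix : ∀ g : G, g • t₀ = t₀) (σ : ℝ) {ε : Ω → M} (hvar : ∫ ω, ‖ε ω‖ ^ 2 = 1) :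
    ∫ ω, ⨅ g : G, ‖g • t₀ - (t₀ + σ • ε ω)‖ ^ 2 = σ ^ 2 := by
  simp_rw [hfix, sub_add_cancel_left, norm_neg, norm_smul, mul_pow, Real.norm_eq_abs, sq_abs,
    ciInf_const]
  rw [integral_const_mul, hvar, mul_one]

section SMulIsometry

variable {g : G} (hlin : IsLinearMap ℝ fun m : M => g • m) (hiso : ∀ m : M, ‖g • m‖ = ‖m‖)
include hlin hiso

lemma inner_smul_left_eq_inner_inv_smul (a b : M) : ⟪g • a, b⟫ = ⟪a, g⁻¹ • b⟫ :=
  calc ⟪g • a, b⟫ = ⟪g • a, g • g⁻¹ • b⟫ := by rw [smul_inv_smul]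
    _ = ⟪a, g⁻¹ • b⟫ := LinearIsometry.inner_map_map ⟨IsLinearMap.mk' _ hlin, hiso⟩ a _

lemma norm_smul_add_sub_add_sq {t₀ : M} (ht₀ : g • t₀ = t₀) (s σ : ℝ) (v e : M) :
    ‖g • (t₀ + s • v) - (t₀ + σ • e)‖ ^ 2
      = s ^ 2 * ‖v‖ ^ 2 + σ ^ 2 * ‖e‖ ^ 2 - 2 * s * σ * ⟪v, g⁻¹ • e⟫ := by
  have hsub : g • (t₀ + s • v) - (t₀ + σ • e) = s • (g • v) - σ • e := by
    rw [hlin.map_add, hlin.map_smul, ht₀]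
    abel
  rw [hsub, norm_sub_sq_real, real_inner_smul_left, real_inner_smul_right, norm_smul s, norm_smul σ,
    hiso, inner_smul_left_eq_inner_inv_smul hlin hiso, mul_pow, mul_pow, Real.norm_eq_abs,
    Real.norm_eq_abs, sq_abs, sq_abs]
  ring

lemma inner_smul_sub_pos_of_norm_sub_lt {x y : M} (hxy : ‖y - x‖ < ‖g • x - x‖ / 2) :
    0 < ⟪g • x - x, g • y - y⟫ := by
  have hdecomp : g • y - y = (g • x - x) + (g • (y - x) - (y - x)) := by
    rw [hlin.map_sub]
    abel
  set w := g • x - x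
  have hsmall : |⟪w, g • (y - x) - (y - x)⟫| ≤ ‖w‖ * (2 * ‖y - x‖) :=
    calc |⟪w, g • (y - x) - (y - x)⟫| ≤ ‖w‖ * ‖g • (y - x) - (y - x)‖ := abs_real_inner_le_norm _ _
      _ ≤ ‖w‖ * (2 * ‖y - x‖) := by
        gcongr
        exact (norm_sub_le _ _).trans_eq (by rw [hiso]; ring)
  have hw : 0 < ‖w‖ := by linarith [norm_nonneg (y - x)]
  rw [hdecomp, inner_add_right, real_inner_self_eq_norm_sq]
  nlinarith [neg_abs_le ⟪w, g • (y - x) - (y - x)⟫]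

end SMulIsometry

variable (H : Subgroup G)

lemma bddAbove_range_inner_smul (hiso : ∀ h ∈ H, ∀ m : M, ‖h • m‖ = ‖m‖) (v y : M) :
    BddAbove (Set.range fun h : H => ⟪v, (h : G) • y⟫) := by
  refine ⟨‖v‖ * ‖y‖, ?_⟩
  rintro _ ⟨h, rfl⟩
  simpa only [hiso h h.2] using real_inner_le_norm v ((h : G) • y)

lemma iInf_norm_smul_add_sub_add_sq (hlin : ∀ h ∈ H, IsLinearMap ℝ fun m : M => h • m)
    (hiso : ∀ h ∈ H, ∀ m : M, ‖h • m‖ = ‖m‖) {t₀ : M} (hfix : ∀ h ∈ H, h • t₀ = t₀) {s σ : ℝ}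
    (hsσ : 0 ≤ s * σ) (v e : M) :
    ⨅ h : H, ‖(h : G) • (t₀ + s • v) - (t₀ + σ • e)‖ ^ 2
      = s ^ 2 * ‖v‖ ^ 2 + σ ^ 2 * ‖e‖ ^ 2 - 2 * s * σ * ⨆ h : H, ⟪v, (h : G) • e⟫ := by
  set C := s ^ 2 * ‖v‖ ^ 2 + σ ^ 2 * ‖e‖ ^ 2
  calc ⨅ h : H, ‖(h : G) • (t₀ + s • v) - (t₀ + σ • e)‖ ^ 2
      = ⨅ h : H, C - 2 * s * σ * ⟪v, ((h⁻¹ : H) : G) • e⟫ :=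
        iInf_congr fun h => norm_smul_add_sub_add_sq (hlin h h.2) (hiso h h.2) (hfix h h.2) s σ v e
    _ = ⨅ h : H, C - 2 * s * σ * ⟪v, (h : G) • e⟫ :=
        (Equiv.inv H).iInf_comp (g := fun h : H => C - 2 * s * σ * ⟪v, (h : G) • e⟫)
    _ = C - 2 * s * σ * ⨆ h : H, ⟪v, (h : G) • e⟫ :=
        ciInf_sub_mul_eq_sub_mul_ciSup C (by linarith) (bddAbove_range_inner_smul H hiso v e)

lemma inner_smul_sub_le_iSup_add_iSup_neg (hiso : ∀ h ∈ H, ∀ m : M, ‖h • m‖ = ‖m‖) {g : G}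
    (hg : g ∈ H) (v y : M) :
    ⟪v, g • y - y⟫ ≤ (⨆ h : H, ⟪v, (h : G) • y⟫) + ⨆ h : H, ⟪-v, (h : G) • y⟫ := by
  have hg_le := le_ciSup (bddAbove_range_inner_smul H hiso v y) ⟨g, hg⟩
  have hone_le := le_ciSup (bddAbove_range_inner_smul H hiso (-v) y) 1
  simp only [OneMemClass.coe_one, one_smul] at hone_le
  rw [inner_sub_right]
  linarith [inner_neg_left (𝕜 := ℝ) v y]

variable {Ω : Type*} [MeasureSpace Ω] {ε : Ω → M}

lemma integral_iInf_norm_smul_add_sub_add_sq [IsProbabilityMeasure (ℙ : Measure Ω)]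
    (hlin : ∀ h ∈ H, IsLinearMap ℝ fun m : M => h • m) (hiso : ∀ h ∈ H, ∀ m : M, ‖h • m‖ = ‖m‖)
    {t₀ : M} (hfix : ∀ h ∈ H, h • t₀ = t₀) {s σ : ℝ} (hsσ : 0 ≤ s * σ)
    (hε2 : Integrable fun ω => ‖ε ω‖ ^ 2) (hvar : ∫ ω, ‖ε ω‖ ^ 2 = 1) {v : M} (hv : ‖v‖ = 1)
    (hsup : Integrable fun ω => ⨆ h : H, ⟪v, (h : G) • ε ω⟫) :
    ∫ ω, ⨅ h : H, ‖(h : G) • (t₀ + s • v) - (t₀ + σ • ε ω)‖ ^ 2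
      = s ^ 2 + σ ^ 2 - 2 * s * σ * ∫ ω, ⨆ h : H, ⟪v, (h : G) • ε ω⟫ := by
  have hconst : Integrable fun ω => s ^ 2 + σ ^ 2 * ‖ε ω‖ ^ 2 :=
    (integrable_const _).add (hε2.const_mul _)
  simp_rw [iInf_norm_smul_add_sub_add_sq H hlin hiso hfix hsσ, hv, one_pow, mul_one]
  rw [integral_sub hconst (hsup.const_mul _),
    integral_add (integrable_const _) (hε2.const_mul _), integral_const, integral_const_mul,
    integral_const_mul, hvar]
  simp

lemma integral_iSup_inner_smul_nonpos [IsProbabilityMeasure (ℙ : Measure Ω)]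
    (hlin : ∀ h ∈ H, IsLinearMap ℝ fun m : M => h • m) (hiso : ∀ h ∈ H, ∀ m : M, ‖h • m‖ = ‖m‖)
    {t₀ : M} (hfix : ∀ h ∈ H, h • t₀ = t₀) {σ : ℝ} (hσ : 0 < σ)
    (hε2 : Integrable fun ω => ‖ε ω‖ ^ 2) (hvar : ∫ ω, ‖ε ω‖ ^ 2 = 1) {v : M} (hv : ‖v‖ = 1)
    (hsup : Integrable fun ω => ⨆ h : H, ⟪v, (h : G) • ε ω⟫)
    (hmin : ∀ m, σ ^ 2 ≤ ∫ ω, ⨅ h : H, ‖(h : G) • m - (t₀ + σ • ε ω)‖ ^ 2) :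
    ∫ ω, ⨆ h : H, ⟪v, (h : G) • ε ω⟫ ≤ 0 := by
  by_contra! hc
  set c := ∫ ω, ⨆ h : H, ⟪v, (h : G) • ε ω⟫
  -- at `t₀ + σ c • v` the value is `σ² (1 - c²)`
  have hmin_at := hmin (t₀ + (σ * c) • v)
  rw [integral_iInf_norm_smul_add_sub_add_sq H hlin hiso hfix (by positivity) hε2 hvar hv hsup]
    at hmin_at
  nlinarith [pow_pos (mul_pos hσ hc) 2]

lemma exists_integral_iSup_inner_add_pos (hlin : ∀ h ∈ H, IsLinearMap ℝ fun m : M => h • m)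
    (hiso : ∀ h ∈ H, ∀ m : M, ‖h • m‖ = ‖m‖) {x : M}
    (hx : ∀ r > 0, 0 < ℙ (ε ⁻¹' Metric.ball x r)) {g : G} (hg : g ∈ H) (hne : g • x ≠ x)
    (hsup : ∀ v : M, ‖v‖ = 1 → Integrable fun ω => ⨆ h : H, ⟪v, (h : G) • ε ω⟫) :
    ∃ v : M, ‖v‖ = 1 ∧
      0 < (∫ ω, ⨆ h : H, ⟪v, (h : G) • ε ω⟫) + ∫ ω, ⨆ h : H, ⟪-v, (h : G) • ε ω⟫ := by
  set w := g • x - x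
  have hw : 0 < ‖w‖ := norm_pos_iff.mpr (sub_ne_zero.mpr hne)
  set v := ‖w‖⁻¹ • w
  have hv : ‖v‖ = 1 := by
    rw [norm_smul, norm_inv, norm_norm, inv_mul_cancel₀ hw.ne']
  have hv' : ‖-v‖ = 1 := by rwa [norm_neg]
  refine ⟨v, hv, ?_⟩
  rw [← integral_add (hsup v hv) (hsup (-v) hv')]
  have hlow := fun ω => inner_smul_sub_le_iSup_add_iSup_neg H hiso hg v (ε ω)
  have hnonneg : 0 ≤ fun ω => (⨆ h : H, ⟪v, (h : G) • ε ω⟫) + ⨆ h : H, ⟪-v, (h : G) • ε ω⟫ :=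
    fun ω => by simpa using inner_smul_sub_le_iSup_add_iSup_neg H hiso H.one_mem v (ε ω)
  refine (integral_pos_iff_support_of_nonneg hnonneg ((hsup v hv).add (hsup (-v) hv'))).mpr
    ((hx _ (half_pos hw)).trans_le (measure_mono fun ω hω => ?_))
  have hclose : ‖ε ω - x‖ < ‖w‖ / 2 := by simpa [dist_eq_norm] using hω
  have hpos : 0 < ⟪v, g • ε ω - ε ω⟫ := by
    rw [real_inner_smul_left]
    exact mul_pos (inv_pos.mpr hw)
      (inner_smul_sub_pos_of_norm_sub_lt (hlin g hg) (hiso g hg) hclose)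
  exact (hpos.trans_le (hlow ω)).ne'

end IsometricAction

theorem stmt11_general {M : Type*} [NormedAddCommGroup M] [InnerProductSpace ℝ M]
    {G : Type*} [Group G] [MulAction G M] (H : Subgroup G)
    (hlin : ∀ h ∈ H, IsLinearMap ℝ (fun m : M => h • m))
    (hiso : ∀ h ∈ H, ∀ m : M, ‖h • m‖ = ‖m‖)
    {Ω : Type*} [MeasureSpace Ω] [IsProbabilityMeasure (ℙ : Measure Ω)]
    (t₀ : M) (hfix : ∀ g : G, g • t₀ = t₀)
    (σ : ℝ) (hσ : 0 < σ) (ε : Ω → M)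
    (hε2 : Integrable (fun ω => ‖ε ω‖ ^ 2)) (hvar : (∫ ω, ‖ε ω‖ ^ 2) = 1)
    (hsupp : ∃ x : M, (∀ r > 0, 0 < ℙ (ε ⁻¹' Metric.ball x r)) ∧
      ∃ h ∈ H, h • x ≠ x)
    (hintsupH : ∀ v : M, ‖v‖ = 1 →
      Integrable (fun ω => ⨆ h : H, ⟪v, (h : G) • ε ω⟫))
    (hFint : ∀ m : M,
      Integrable (fun ω => ⨅ g : G, ‖g • m - (t₀ + σ • ε ω)‖ ^ 2))
    (hFHint : ∀ m : M,
      Integrable (fun ω => ⨅ h : H, ‖(h : G) • m - (t₀ + σ • ε ω)‖ ^ 2))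
    (F : M → ℝ)
    (hF : ∀ m, F m = ∫ ω, ⨅ g : G, ‖g • m - (t₀ + σ • ε ω)‖ ^ 2) :
    ¬ ∀ m, F t₀ ≤ F m := by
  intro hmin
  obtain ⟨x, hx, g, hg, hne⟩ := hsupp
  have hFH_min : ∀ m, σ ^ 2 ≤ ∫ ω, ⨅ h : H, ‖(h : G) • m - (t₀ + σ • ε ω)‖ ^ 2 := fun m =>
    calc σ ^ 2 = F t₀ := by rw [hF, integral_iInf_norm_smul_sub_sq_of_forall_smul_eq hfix σ hvar]
      _ ≤ F m := hmin m
      _ ≤ _ := hF m ▸ integral_iInf_le_integral_iInf_comp Subtype.val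
        (fun _ _ => by positivity) (hFint m) (hFHint m)
  have hsup_nonpos : ∀ v : M, ‖v‖ = 1 → ∫ ω, ⨆ h : H, ⟪v, (h : G) • ε ω⟫ ≤ 0 := fun v hv =>
    integral_iSup_inner_smul_nonpos H hlin hiso (fun h _ => hfix h) hσ hε2 hvar hv
      (hintsupH v hv) hFH_min
  obtain ⟨v, hv, hpos⟩ := exists_integral_iSup_inner_add_pos H hlin hiso hx hg hne hintsupH
  linarith [hsup_nonpos v hv, hsup_nonpos (-v) (by rwa [norm_neg])]

/-- Non-invariant case with an isometric subgroup: if `t₀` is a fixed point of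
the (not necessarily isometric) action of `G`, `H ≤ G` acts by linear
isometries, and the support of the standardized noise `ε` is not contained in
the set of fixed points of `H`, then `t₀` does not minimize the pre-variance
`F(m) = E(inf_{g∈G} ‖g·m - Y‖²)` for `Y = t₀ + σε`. -/
theorem stmt11 {M : Type*} [NormedAddCommGroup M] [InnerProductSpace ℝ M]
    {G : Type*} [Group G] [MulAction G M] (H : Subgroup G)
    (hlin : ∀ h ∈ H, IsLinearMap ℝ (fun m : M => h • m))
    (hiso : ∀ h ∈ H, ∀ m : M, ‖h • m‖ = ‖m‖)
    {Ω : Type*} [MeasureSpace Ω] [IsProbabilityMeasure (ℙ : Measure Ω)]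
    (t₀ : M) (hfix : ∀ g : G, g • t₀ = t₀)
    (σ : ℝ) (hσ : 0 < σ) (ε : Ω → M)
    (hint : Integrable ε) (hmean : (∫ ω, ε ω) = 0)
    (hε2 : Integrable (fun ω => ‖ε ω‖ ^ 2)) (hvar : (∫ ω, ‖ε ω‖ ^ 2) = 1)
    (hsupp : ∃ x : M, (∀ r > 0, 0 < ℙ (ε ⁻¹' Metric.ball x r)) ∧
      ∃ h ∈ H, h • x ≠ x)
    (hintsupH : ∀ v : M, ‖v‖ = 1 →
      Integrable (fun ω => ⨆ h : H, ⟪v, (h : G) • ε ω⟫))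
    (hFint : ∀ m : M,
      Integrable (fun ω => ⨅ g : G, ‖g • m - (t₀ + σ • ε ω)‖ ^ 2))
    (hFHint : ∀ m : M,
      Integrable (fun ω => ⨅ h : H, ‖(h : G) • m - (t₀ + σ • ε ω)‖ ^ 2))
    (F : M → ℝ)
    (hF : ∀ m, F m = ∫ ω, ⨅ g : G, ‖g • m - (t₀ + σ • ε ω)‖ ^ 2) :
    ¬ ∀ m, F t₀ ≤ F m :=
  stmt11_general H hlin hiso t₀ hfix σ hσ ε hε2 hvar hsupp hintsupH hFint hFHint F hF
end

section
/- In the max-max algorithm for a finite group G acting by linear isometries on a Hilbert space M with sample Y₁,…,Y_I, the sequence of iterates (m_n) becomes stationary in a finite number of steps: there exists n with m_{n+1} = m_n, and the empirical variance F_I(m_n) is non-increasing along the iterations. -/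
/-!
Registration followed by averaging can only lower the empirical variance: re-registering at
the new mean `m_{n+1}` costs at most the squared distances to the old registrations
`gᵢⁿ·Yᵢ`, and since `m_{n+1}` is their mean, these undercut the variance at `m_n` by exactly
`I ‖m_n - m_{n+1}‖²`. So the variance strictly drops at every step that moves the iterate, while
the iterates range over the finite set of means `(1/I) ∑ᵢ gᵢ·Yᵢ`; hence some step does not move.
-/

open RealInnerProductSpace

theorem exists_succ_eq_of_finite_range_of_lt {α β : Type*} [Preorder β] {m : ℕ → α}
    (V : α → β) (hfin : (Set.range m).Finite)
    (hdec : ∀ n, m (n + 1) ≠ m n → V (m (n + 1)) < V (m n)) :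
    ∃ n, m (n + 1) = m n := by
  by_contra! hmove
  have hanti : StrictAnti (V ∘ m) := strictAnti_nat_of_succ_lt fun n => hdec n (hmove n)
  exact Set.infinite_range_of_injective hanti.injective.of_comp hfin

theorem iInf_norm_sub_sq_eq_of_forall_le {E G : Type*} [SeminormedAddCommGroup E] [Finite G]
    {x : E} {f : G → E} {g₀ : G}
    (hmin : ∀ g, ‖x - f g₀‖ ≤ ‖x - f g‖) :
    ⨅ g, ‖x - f g‖ ^ 2 = ‖x - f g₀‖ ^ 2 :=
  have : Nonempty G := ⟨g₀⟩
  le_antisymm (ciInf_le (Finite.bddBelow_range _) g₀)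
    (le_ciInf fun g => pow_le_pow_left₀ (norm_nonneg _) (hmin g) 2)

section Variance

variable {M : Type*} [NormedAddCommGroup M] [InnerProductSpace ℝ M] {ι : Type*} [Fintype ι]

theorem sum_norm_sub_sq_of_sum_eq_card_smul (a : ι → M) {c : M}
    (hc : ∑ i, a i = (Fintype.card ι : ℝ) • c) (x : M) :
    ∑ i, ‖x - a i‖ ^ 2 = ∑ i, ‖c - a i‖ ^ 2 + Fintype.card ι * ‖x - c‖ ^ 2 := by
  have hcentered : ∑ i, (c - a i) = 0 := by
    rw [Finset.sum_sub_distrib, hc, Finset.sum_const, Finset.card_univ, ← Nat.cast_smul_eq_nsmul ℝ,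
      sub_self]
  calc ∑ i, ‖x - a i‖ ^ 2 = ∑ i, ‖(x - c) + (c - a i)‖ ^ 2 := by simp only [sub_add_sub_cancel]
    _ = Fintype.card ι * ‖x - c‖ ^ 2 + 2 * ⟪x - c, ∑ i, (c - a i)⟫ + ∑ i, ‖c - a i‖ ^ 2 := by
      simp only [norm_add_sq_real, Finset.sum_add_distrib, inner_sum, Finset.mul_sum,
        Finset.sum_const, Finset.card_univ, nsmul_eq_mul]
    _ = ∑ i, ‖c - a i‖ ^ 2 + Fintype.card ι * ‖x - c‖ ^ 2 := by
      rw [hcentered, inner_zero_right]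
      ring

variable {G : Type*} [Finite G]

theorem sum_iInf_norm_sub_sq_add_card_mul_le (O : ι → G → M) {x x' : M} (k : ι → G)
    (hk : ∀ i g, ‖x - O i (k i)‖ ≤ ‖x - O i g‖)
    (hx' : ∑ i, O i (k i) = (Fintype.card ι : ℝ) • x') :
    (∑ i, ⨅ g, ‖x' - O i g‖ ^ 2) + Fintype.card ι * ‖x - x'‖ ^ 2 ≤
      ∑ i, ⨅ g, ‖x - O i g‖ ^ 2 := by
  calc (∑ i, ⨅ g, ‖x' - O i g‖ ^ 2) + Fintype.card ι * ‖x - x'‖ ^ 2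
      ≤ ∑ i, ‖x' - O i (k i)‖ ^ 2 + Fintype.card ι * ‖x - x'‖ ^ 2 :=
        add_le_add_left (Finset.sum_le_sum fun i _ => ciInf_le (Finite.bddBelow_range _) (k i)) _
    _ = ∑ i, ‖x - O i (k i)‖ ^ 2 :=
        (sum_norm_sub_sq_of_sum_eq_card_smul (fun i => O i (k i)) hx' x).symm
    _ = ∑ i, ⨅ g, ‖x - O i g‖ ^ 2 :=
        Finset.sum_congr rfl fun i _ => (iInf_norm_sub_sq_eq_of_forall_le (hk i)).symm

end Variance

/-- For a finite group acting by linear isometries, the max-max algorithm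
(alternating registration and averaging) makes the empirical variance
non-increasing and becomes stationary after a finite number of steps. -/
theorem stmt15 {M : Type*} [NormedAddCommGroup M] [InnerProductSpace ℝ M]
    {G : Type*} [Group G] [Fintype G] (ρ : G →* (M →ₗᵢ[ℝ] M))
    {I : ℕ} (Y : Fin I → M) (m : ℕ → M) (g : ℕ → Fin I → G)
    (hreg : ∀ n i, ∀ g' : G, ‖m n - ρ (g n i) (Y i)‖ ≤ ‖m n - ρ g' (Y i)‖)
    (hupd : ∀ n, m (n + 1) = (I : ℝ)⁻¹ • ∑ i, ρ (g n i) (Y i)) :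
    (∀ n, ((I : ℝ)⁻¹ * ∑ i, ⨅ g' : G, ‖m (n + 1) - ρ g' (Y i)‖ ^ 2) ≤
      (I : ℝ)⁻¹ * ∑ i, ⨅ g' : G, ‖m n - ρ g' (Y i)‖ ^ 2) ∧
    ∃ n, m (n + 1) = m n := by
  rcases I.eq_zero_or_pos with rfl | hI
  · exact ⟨fun n => by simp, 1, by simp [hupd]⟩
  set V : M → ℝ := fun x => ∑ i, ⨅ g' : G, ‖x - ρ g' (Y i)‖ ^ 2
  have hdescent : ∀ n, V (m (n + 1)) + I * ‖m n - m (n + 1)‖ ^ 2 ≤ V (m n) := fun n => by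
    have hmean : ∑ i, ρ (g n i) (Y i) = (Fintype.card (Fin I) : ℝ) • m (n + 1) := by
      rw [Fintype.card_fin, hupd n, smul_inv_smul₀ (Nat.cast_ne_zero.2 hI.ne')]
    simpa only [Fintype.card_fin] using
      sum_iInf_norm_sub_sq_add_card_mul_le (fun i g' => ρ g' (Y i)) (g n) (hreg n) hmean
  refine ⟨fun n => mul_le_mul_of_nonneg_left ?_ (by positivity), ?_⟩
  · linarith [hdescent n, show 0 ≤ (I : ℝ) * ‖m n - m (n + 1)‖ ^ 2 by positivity]
  -- `m 0` is arbitrary: only the later iterates are means of registered samples.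
  have hfin : (Set.range fun n => m (n + 1)).Finite :=
    (Set.finite_range fun k : Fin I → G => (I : ℝ)⁻¹ • ∑ i, ρ (k i) (Y i)).subset
      (Set.range_subset_iff.2 fun n => ⟨g n, (hupd n).symm⟩)
  obtain ⟨n, hn⟩ := exists_succ_eq_of_finite_range_of_lt V hfin fun n hne => by
    have hmove : 0 < (I : ℝ) * ‖m (n + 1) - m (n + 1 + 1)‖ ^ 2 := by
      have := sub_ne_zero.2 (Ne.symm hne)
      positivity
    linarith [hdescent (n + 1)]
  exact ⟨n + 1, hn⟩
end

section
/- Let G be a finite group of linear isometries of a Hilbert space M and m̂ a fixed point of the max-max algorithm (m̂ = (1/I)∑ᵢ gᵢ·Yᵢ where each gᵢ is a minimizer of g ↦ ‖m̂ − g·Yᵢ‖). If for each i the registration of Yᵢ with respect to m̂ is unique (the minimizing gᵢ is unique), then m̂ is a local minimum of the empirical variance F_I(x) = (1/I)∑ᵢ min_{g∈G} ‖x − g·Yᵢ‖². -/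
/-!
Near `m̂` the unique registrations `gᵢ` stay optimal, since each strict inequality
`‖m̂ - gᵢ Yᵢ‖ < ‖m̂ - g Yᵢ‖` persists by continuity. So locally `F_I` is the mean squared
distance to the fixed points `gᵢ Yᵢ`, which is minimised at their mean, i.e. at `m̂`.
-/

open RealInnerProductSpace Filter Topology

lemma ciInf_eq_of_forall_le {ι : Type*} [Finite ι] (f : ι → ℝ) (i₀ : ι)
    (h : ∀ i, f i₀ ≤ f i) : ⨅ i, f i = f i₀ :=
  have : Nonempty ι := ⟨i₀⟩
  le_antisymm (ciInf_le (Set.finite_range f).bddBelow i₀) (le_ciInf h)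

lemma eventually_forall_le_of_forall_lt {X ι : Type*} [TopologicalSpace X] [Finite ι]
    {f : ι → X → ℝ} {x₀ : X} {i₀ : ι} (hf : ∀ i, ContinuousAt (f i) x₀)
    (hlt : ∀ i ≠ i₀, f i₀ x₀ < f i x₀) : ∀ᶠ x in 𝓝 x₀, ∀ i, f i₀ x ≤ f i x := by
  refine eventually_all.2 fun i => ?_
  rcases eq_or_ne i i₀ with rfl | hi
  · exact .of_forall fun _ => le_rfl
  · exact ((hf i₀).eventually_lt (hf i) (hlt i hi)).mono fun _ => le_of_lt

section Mean

variable {M ι : Type*} [NormedAddCommGroup M] [InnerProductSpace ℝ M] [Fintype ι]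

lemma sum_sub_mean_eq_zero (z : ι → M) :
    ∑ i, ((Fintype.card ι : ℝ)⁻¹ • ∑ j, z j - z i) = 0 := by
  rcases isEmpty_or_nonempty ι with _ | _
  · simp
  · have hcard : (Fintype.card ι : ℝ) ≠ 0 := Nat.cast_ne_zero.2 Fintype.card_ne_zero
    rw [Finset.sum_sub_distrib, Finset.sum_const, Finset.card_univ,
      ← Nat.cast_smul_eq_nsmul ℝ, smul_smul, mul_inv_cancel₀ hcard, one_smul, sub_self]

lemma sum_norm_sub_sq_eq_card_mul_add (z : ι → M) (x : M) :
    ∑ i, ‖x - z i‖ ^ 2 = Fintype.card ι * ‖x - (Fintype.card ι : ℝ)⁻¹ • ∑ j, z j‖ ^ 2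
      + ∑ i, ‖(Fintype.card ι : ℝ)⁻¹ • ∑ j, z j - z i‖ ^ 2 := by
  set m := (Fintype.card ι : ℝ)⁻¹ • ∑ j, z j
  have expand : ∀ i, ‖x - z i‖ ^ 2 = ‖x - m‖ ^ 2 + 2 * ⟪x - m, m - z i⟫ + ‖m - z i‖ ^ 2 :=
    fun i => by rw [← norm_add_sq_real, sub_add_sub_cancel]
  have hzero : ∑ i, (m - z i) = 0 := sum_sub_mean_eq_zero z
  simp only [expand, Finset.sum_add_distrib, ← Finset.mul_sum, ← inner_sum,
    hzero, inner_zero_right, mul_zero, add_zero, Finset.sum_const,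
    Finset.card_univ, nsmul_eq_mul]

lemma sum_norm_mean_sub_sq_le (z : ι → M) (x : M) :
    ∑ i, ‖(Fintype.card ι : ℝ)⁻¹ • ∑ j, z j - z i‖ ^ 2 ≤ ∑ i, ‖x - z i‖ ^ 2 := by
  rw [sum_norm_sub_sq_eq_card_mul_add z x]
  have : 0 ≤ (Fintype.card ι : ℝ) * ‖x - (Fintype.card ι : ℝ)⁻¹ • ∑ j, z j‖ ^ 2 := by
    positivity
  linarith

end Mean

/-- If `m̂` is a fixed point of the max-max algorithm for a finite group of
linear isometries and the registration of each `Yᵢ` with respect to `m̂` is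
unique, then `m̂` is a local minimum of the empirical variance `F_I`. -/
theorem stmt16 {M : Type*} [NormedAddCommGroup M] [InnerProductSpace ℝ M]
    {G : Type*} [Group G] [Fintype G] (ρ : G →* (M →ₗᵢ[ℝ] M))
    {I : ℕ} (Y : Fin I → M) (mhat : M) (ghat : Fin I → G)
    (hreg : ∀ i, ∀ g' : G, ‖mhat - ρ (ghat i) (Y i)‖ ≤ ‖mhat - ρ g' (Y i)‖)
    (hfix : mhat = (I : ℝ)⁻¹ • ∑ i, ρ (ghat i) (Y i))
    (huniq : ∀ i, ∀ g' : G,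
      ‖mhat - ρ g' (Y i)‖ = ‖mhat - ρ (ghat i) (Y i)‖ → g' = ghat i) :
    IsLocalMin (fun x : M => (I : ℝ)⁻¹ * ∑ i, ⨅ g' : G, ‖x - ρ g' (Y i)‖ ^ 2)
      mhat := by
  have hnear : ∀ᶠ x in 𝓝 mhat, ∀ i g, ‖x - ρ (ghat i) (Y i)‖ ≤ ‖x - ρ g (Y i)‖ :=
    eventually_all.2 fun i => eventually_forall_le_of_forall_lt
      (f := fun g x => ‖x - ρ g (Y i)‖) (fun _ => by fun_prop)
      fun g hg => (hreg i g).lt_of_ne fun h => hg (huniq i g h.symm)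
  have hinf : ∀ x, (∀ i g, ‖x - ρ (ghat i) (Y i)‖ ≤ ‖x - ρ g (Y i)‖) →
      ∀ i, ⨅ g, ‖x - ρ g (Y i)‖ ^ 2 = ‖x - ρ (ghat i) (Y i)‖ ^ 2 :=
    fun x hx i => ciInf_eq_of_forall_le _ _ fun g => by gcongr; exact hx i g
  filter_upwards [hnear] with x hx
  simp only [hinf x hx, hinf mhat hreg]
  gcongr _ * ?_
  have hmean := sum_norm_mean_sub_sq_le (fun i => ρ (ghat i) (Y i)) x
  rwa [Fintype.card_fin, ← hfix] at hmean
end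

section
/- Let V be a closed linear subspace of a Hilbert space M, with G = V acting on M by translations (v·m = m + v). Then the variance F(m) = E(inf_{v∈V} ‖m + v − Y‖²) equals E(‖p(m) − p(Y)‖²) where p is the orthogonal projection onto V^⊥; consequently, for Y = t₀ + Φ + σε with Φ random in V and ε centered independent noise, t₀ minimizes F (template estimation is consistent). -/
open MeasureTheory ProbabilityTheory RealInnerProductSpace

/-!
Translating by `v ∈ V` only moves the `V`-component of `m - Y`, so the infimum over the orbit
kills that component and leaves `‖p(m - Y)‖²` (Pythagoras). Since `p` is linear and annihilates
`Φ`, `p(m) - p(Y) = (p(m) - p(t₀)) - σ p(ε)` with `p(ε)` centred, and the bias–variance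
decomposition gives `F(m) = ‖p(m) - p(t₀)‖² + σ² E‖p(ε)‖²`, which is smallest at `m = t₀`.
-/

namespace Submodule

variable {E : Type*} [NormedAddCommGroup E] [InnerProductSpace ℝ E]
  (K : Submodule ℝ E) [K.HasOrthogonalProjection]

theorem norm_add_sq_eq_of_mem (x : E) {v : E} (hv : v ∈ K) :
    ‖x + v‖ ^ 2 = ‖K.starProjection x + v‖ ^ 2 + ‖Kᗮ.starProjection x‖ ^ 2 := by
  have hKv : K.starProjection v = v := K.starProjection_eq_self_iff.2 hv
  rw [K.norm_sq_eq_add_norm_sq_starProjection (x + v), map_add, map_add, hKv,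
    Kᗮ.starProjection_apply_eq_zero_iff.2 (K.le_orthogonal_orthogonal hv), add_zero]

theorem iInf_norm_add_sq_eq (x : E) :
    ⨅ v : K, ‖x + v‖ ^ 2 = ‖Kᗮ.starProjection x‖ ^ 2 := by
  refine le_antisymm ?_ (le_ciInf fun v => ?_)
  · have hbdd : BddBelow (Set.range fun v : K => ‖x + v‖ ^ 2) :=
      ⟨0, by rintro _ ⟨v, rfl⟩; positivity⟩
    refine (ciInf_le hbdd (-K.orthogonalProjectionOnto x)).trans_eq ?_
    rw [K.norm_add_sq_eq_of_mem x (-K.orthogonalProjectionOnto x).2]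
    simp
  · rw [K.norm_add_sq_eq_of_mem x v.2]
    exact le_add_of_nonneg_left (sq_nonneg _)

end Submodule

theorem integral_norm_sub_sq_of_integral_eq_zero {Ω E : Type*} [MeasurableSpace Ω]
    {μ : Measure Ω} [IsProbabilityMeasure μ] [NormedAddCommGroup E] [InnerProductSpace ℝ E]
    [CompleteSpace E] {ξ : Ω → E} (hξ : MemLp ξ 2 μ) (hξ0 : ∫ ω, ξ ω ∂μ = 0) (b : E) :
    ∫ ω, ‖b - ξ ω‖ ^ 2 ∂μ = ‖b‖ ^ 2 + ∫ ω, ‖ξ ω‖ ^ 2 ∂μ := by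
  have hint : Integrable ξ μ := hξ.integrable one_le_two
  have hsq : Integrable (fun ω => ‖ξ ω‖ ^ 2) μ :=
    (memLp_two_iff_integrable_sq_norm hξ.1).1 hξ
  have hcross : Integrable (fun ω => 2 * ⟪b, ξ ω⟫) μ := (hint.const_inner b).const_mul 2
  have hlin : Integrable (fun ω => ‖b‖ ^ 2 - 2 * ⟪b, ξ ω⟫) μ :=
    (integrable_const _).sub hcross
  simp_rw [norm_sub_sq_real]
  rw [integral_add hlin hsq, integral_sub (integrable_const _) hcross, integral_const_mul,
    integral_inner hint, hξ0]
  simp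

theorem stmt18_general {M : Type*} [NormedAddCommGroup M] [InnerProductSpace ℝ M]
    [CompleteSpace M] (V : Submodule ℝ M) (hV : IsClosed (V : Set M))
    [Submodule.HasOrthogonalProjection Vᗮ]
    {Ω : Type*} [MeasureSpace Ω] [IsProbabilityMeasure (ℙ : Measure Ω)]
    (t₀ : M) (σ : ℝ) (Φ : Ω → V) (ε : Ω → M)
    (hint : Integrable ε) (hmean : (∫ ω, ε ω) = 0)
    (hε2 : Integrable (fun ω => ‖ε ω‖ ^ 2))
    (F : M → ℝ)
    (hF : ∀ m, F m = ∫ ω, ⨅ v : V, ‖m + (v : M) - (t₀ + (Φ ω : M) + σ • ε ω)‖ ^ 2) :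
    (∀ m, F m = ∫ ω, ‖(Submodule.orthogonalProjectionOnto Vᗮ m : M) -
        (Submodule.orthogonalProjectionOnto Vᗮ (t₀ + (Φ ω : M) + σ • ε ω) : M)‖ ^ 2) ∧
    (∀ m, F t₀ ≤ F m) := by
  have : CompleteSpace V := hV.completeSpace_coe
  simp only [Submodule.coe_orthogonalProjectionOnto_apply]
  set P := Vᗮ.starProjection
  have hdist : ∀ m, F m = ∫ ω, ‖P m - P (t₀ + Φ ω + σ • ε ω)‖ ^ 2 := fun m => by
    rw [hF m]
    congr with ω
    rw [← map_sub, ← V.iInf_norm_add_sq_eq]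
    congr with v
    abel_nf
  set ξ : Ω → M := fun ω => σ • P (ε ω)
  have hξ : MemLp ξ 2 := (σ • P).comp_memLp' ((memLp_two_iff_integrable_sq_norm hint.1).2 hε2)
  have hξ0 : ∫ ω, ξ ω = 0 := by
    rw [show ∫ ω, ξ ω = (σ • P) (∫ ω, ε ω) from (σ • P).integral_comp_comm hint, hmean, map_zero]
  have hPY : ∀ ω, P (t₀ + Φ ω + σ • ε ω) = P t₀ + ξ ω := fun ω => by
    rw [map_add, map_add, map_smul, Vᗮ.starProjection_apply_eq_zero_iff.2
      (V.le_orthogonal_orthogonal (Φ ω).2), add_zero]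
  have hF_eq : ∀ m, F m = ‖P m - P t₀‖ ^ 2 + ∫ ω, ‖ξ ω‖ ^ 2 := fun m => by
    rw [hdist m, ← integral_norm_sub_sq_of_integral_eq_zero hξ hξ0]
    simp_rw [hPY, sub_add_eq_sub_sub]
  refine ⟨hdist, fun m => ?_⟩
  rw [hF_eq, hF_eq, sub_self, norm_zero]
  gcongr
  positivity

/-- For the translation action of a closed subspace `V` on a Hilbert space `M`,
the variance satisfies `F(m) = E(‖p(m) - p(Y)‖²)` where `p` is the orthogonal
projection onto `Vᗮ`; consequently, for `Y = t₀ + Φ + σε` with `Φ` random in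
`V` and `ε` centered, the template `t₀` minimizes `F`: estimation is
consistent. -/
theorem stmt18 {M : Type*} [NormedAddCommGroup M] [InnerProductSpace ℝ M]
    [CompleteSpace M] (V : Submodule ℝ M) (hV : IsClosed (V : Set M))
    [Submodule.HasOrthogonalProjection Vᗮ]
    {Ω : Type*} [MeasureSpace Ω] [IsProbabilityMeasure (ℙ : Measure Ω)]
    (t₀ : M) (σ : ℝ) (Φ : Ω → V) (ε : Ω → M)
    (hint : Integrable ε) (hmean : (∫ ω, ε ω) = 0)
    (hε2 : Integrable (fun ω => ‖ε ω‖ ^ 2))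
    (hΦ2 : Integrable (fun ω => ‖(Φ ω : M)‖ ^ 2))
    (F : M → ℝ)
    (hF : ∀ m, F m = ∫ ω, ⨅ v : V, ‖m + (v : M) - (t₀ + (Φ ω : M) + σ • ε ω)‖ ^ 2) :
    (∀ m, F m = ∫ ω, ‖(Submodule.orthogonalProjectionOnto Vᗮ m : M) -
        (Submodule.orthogonalProjectionOnto Vᗮ (t₀ + (Φ ω : M) + σ • ε ω) : M)‖ ^ 2) ∧
    (∀ m, F t₀ ≤ F m) :=
  stmt18_general V hV t₀ σ Φ ε hint hmean hε2 F hF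
end
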